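/- arXiv:0903.5167 — 5 statements merged into one kernel-verified Lean document; each statement's English description precedes it below -/
import Mathlib

section
/- Let n ≥ 0 and let Γ ⊆ ℕ^{n+1} be a finitely generated subsemigroup of (ℕ^{n+1}, +) which generates ℤ^{n+1} as a group. Then there exists an element z ∈ Σ(Γ) such that (z + Σ(Γ)) ∩ ℤ^{n+1} ⊆ Γ. -/
open Set

/-- The image of a vector of natural numbers in Euclidean space. -/
noncomputable def toR (n : ℕ) (α : Fin (n + 1) → ℕ) : EuclideanSpace ℝ (Fin (n + 1)) :=
  WithLp.toLp 2 (fun i => (α i : ℝ))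

/-- The smallest closed convex cone containing a set `S` in `ℝ^{n+1}`. -/
def closedConvexCone (n : ℕ) (S : Set (EuclideanSpace ℝ (Fin (n + 1)))) :
    Set (EuclideanSpace ℝ (Fin (n + 1))) :=
  ⋂₀ {C | S ⊆ C ∧ IsClosed C ∧ Convex ℝ C ∧ ∀ c : ℝ, 0 ≤ c → ∀ x ∈ C, c • x ∈ C}

/-!
Let `Γ` be generated by the finite set `S`, and let `M ⊇ Γ` be the monoid generated by `S`, viewed
in `ℤ^{n+1}`. Every point of the real cone spanned by `S` lies within distance `B = ∑ ‖s‖` of `M`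
(round the coefficients down), so every lattice point of `Σ(Γ)` differs from an element of `M` by
a lattice point of the bounded box `F` of radius `B + 1`. Since `M` generates `ℤ^{n+1}`, each
`f ∈ F` is a difference `p_f - q_f` of elements of `M`, and `z = ∑_{f ∈ F} q_f ∈ M` satisfies
`z + F ⊆ M`. Hence every lattice point of `z + Σ(Γ)` lies in `M`, and after a further shift by an
element of `Γ`, in `Γ`.
-/

theorem AddSubsemigroup.closure_add_mem_of_mem_addSubmonoidClosure {M : Type*} [AddMonoid M]
    {s : Set M} {a m : M} (ha : a ∈ AddSubsemigroup.closure s)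
    (hm : m ∈ AddSubmonoid.closure s) : a + m ∈ AddSubsemigroup.closure s := by
  induction hm using AddSubmonoid.closure_induction generalizing a with
  | mem x hx => exact add_mem ha (subset_closure hx)
  | zero => rwa [add_zero]
  | add x y _ _ ihx ihy => rw [← add_assoc]; exact ihy (ihx ha)

theorem AddSubsemigroup.closure_subset_addSubmonoidClosure {M : Type*} [AddMonoid M]
    (s : Set M) : (AddSubsemigroup.closure s : Set M) ⊆ AddSubmonoid.closure s :=
  AddSubsemigroup.closure_le (S := (AddSubmonoid.closure s).toAddSubsemigroup).2
    AddSubmonoid.subset_closure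

section AddCommGroup

variable {G : Type*} [AddCommGroup G]

theorem AddSubmonoid.exists_sub_eq_of_mem_addSubgroupClosure (M : AddSubmonoid G) {v : G}
    (hv : v ∈ AddSubgroup.closure (M : Set G)) : ∃ p ∈ M, ∃ q ∈ M, p - q = v := by
  induction hv using AddSubgroup.closure_induction with
  | mem x hx => exact ⟨x, hx, 0, M.zero_mem, sub_zero x⟩
  | zero => exact ⟨0, M.zero_mem, 0, M.zero_mem, sub_zero 0⟩
  | add a b _ _ iha ihb =>
    obtain ⟨p, hp, q, hq, rfl⟩ := iha
    obtain ⟨p', hp', q', hq', rfl⟩ := ihb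
    exact ⟨p + p', M.add_mem hp hp', q + q', M.add_mem hq hq', by abel⟩
  | neg a _ ih =>
    obtain ⟨p, hp, q, hq, rfl⟩ := ih
    exact ⟨q, hq, p, hp, (neg_sub p q).symm⟩

/-- A new element `p - q` of `F` is absorbed by adding `q` to `z`. -/
theorem AddSubmonoid.exists_add_mem_of_subset_addSubgroupClosure (M : AddSubmonoid G)
    (F : Finset G) (hF : (F : Set G) ⊆ AddSubgroup.closure (M : Set G)) :
    ∃ z ∈ M, ∀ f ∈ F, z + f ∈ M := by
  classical
  induction F using Finset.induction_on with
  | empty => exact ⟨0, M.zero_mem, by simp⟩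
  | insert a F _ ih =>
    obtain ⟨z, hz, hzF⟩ := ih ((Finset.coe_subset.2 (Finset.subset_insert a F)).trans hF)
    obtain ⟨p, hp, q, hq, rfl⟩ :=
      M.exists_sub_eq_of_mem_addSubgroupClosure (hF (Finset.mem_insert_self a F))
    refine ⟨z + q, M.add_mem hz hq, ?_⟩
    simp only [Finset.mem_insert, forall_eq_or_imp]
    refine ⟨by simpa using M.add_mem hz hp, fun f hf => ?_⟩
    simpa [add_right_comm] using M.add_mem (hzF f hf) hq

end AddCommGroup

theorem PointedCone.exists_norm_sub_sum_nsmul_le {α V : Type*} [SeminormedAddCommGroup V]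
    [NormedSpace ℝ V] (s : Finset α) (v : α → V) {x : V}
    (hx : x ∈ PointedCone.hull ℝ (v '' s)) :
    ∃ k : α → ℕ, ‖x - ∑ i ∈ s, k i • v i‖ ≤ ∑ i ∈ s, ‖v i‖ := by
  obtain ⟨c, rfl⟩ := (Submodule.mem_span_image_finset_iff_exists_fun' _).1 hx
  refine ⟨fun i => ⌊(c i : ℝ)⌋₊, ?_⟩
  calc ‖∑ i ∈ s, c i • v i - ∑ i ∈ s, ⌊(c i : ℝ)⌋₊ • v i‖
      = ‖∑ i ∈ s, ((c i : ℝ) - ⌊(c i : ℝ)⌋₊) • v i‖ := by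
        simp [← Finset.sum_sub_distrib, sub_smul, ← Nonneg.coe_smul, Nat.cast_smul_eq_nsmul]
    _ ≤ ∑ i ∈ s, ‖v i‖ := by
        refine (norm_sum_le _ _).trans (Finset.sum_le_sum fun i _ => ?_)
        rw [norm_smul]
        refine mul_le_of_le_one_left (norm_nonneg _) ?_
        rw [Real.norm_of_nonneg (sub_nonneg.2 (Nat.floor_le (c i).2))]
        linarith [Nat.lt_floor_add_one (c i : ℝ)]

theorem image_addSubmonoidClosure_subset_hull {G V : Type*} [AddCommMonoid G] [AddCommGroup V]
    [Module ℝ V] (f : G →+ V) (s : Set G) :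
    f '' AddSubmonoid.closure s ⊆ PointedCone.hull ℝ (f '' s) := by
  rw [← AddSubmonoid.coe_map, AddMonoidHom.map_mclosure]
  exact AddSubmonoid.closure_le (S := (PointedCone.hull ℝ (f '' s)).toAddSubmonoid).2
    PointedCone.subset_hull

section Lattice

variable {ι : Type*}

noncomputable def intToEuclidean : (ι → ℤ) →+ EuclideanSpace ℝ ι where
  toFun w := WithLp.toLp 2 (fun i => (w i : ℝ))
  map_zero' := by ext; simp
  map_add' _ _ := by ext; simp

variable [Fintype ι]

theorem mem_piFinset_Icc_of_norm_intToEuclidean_le [DecidableEq ι] {w : ι → ℤ} {r : ℝ}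
    (h : ‖intToEuclidean w‖ ≤ r) : w ∈ Fintype.piFinset fun _ => Finset.Icc (-⌈r⌉) ⌈r⌉ := by
  simp only [Fintype.mem_piFinset, Finset.mem_Icc, ← abs_le]
  intro i
  have hi : |(w i : ℝ)| ≤ r := (PiLp.norm_apply_le (intToEuclidean w) i).trans h
  exact Int.cast_le.1 ((Int.cast_abs (R := ℝ)) ▸ hi.trans (Int.le_ceil r))

theorem exists_mem_addSubmonoidClosure_norm_sub_lt (T : Finset (ι → ℤ)) {x : EuclideanSpace ℝ ι}
    (hx : x ∈ closure
      (PointedCone.hull ℝ (intToEuclidean '' (T : Set (ι → ℤ))) : Set (EuclideanSpace ℝ ι))) :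
    ∃ y ∈ AddSubmonoid.closure (T : Set (ι → ℤ)),
      ‖x - intToEuclidean y‖ < ∑ t ∈ T, ‖intToEuclidean t‖ + 1 := by
  obtain ⟨x', hx', hxx'⟩ := Metric.mem_closure_iff.1 hx 1 one_pos
  obtain ⟨k, hk⟩ := PointedCone.exists_norm_sub_sum_nsmul_le T intToEuclidean hx'
  refine ⟨∑ t ∈ T, k t • t,
    AddSubmonoid.sum_mem _ fun t ht => nsmul_mem (AddSubmonoid.subset_closure ht) _, ?_⟩
  simp only [map_sum, map_nsmul]
  calc _ ≤ ‖x - x'‖ + ‖x' - ∑ t ∈ T, k t • intToEuclidean t‖ :=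
        norm_sub_le_norm_sub_add_norm_sub _ _ _
    _ < 1 + ∑ t ∈ T, ‖intToEuclidean t‖ := by
        rw [← dist_eq_norm]
        exact add_lt_add_of_lt_of_le hxx' hk
    _ = _ := add_comm _ _

theorem exists_shifted_cone_subset_addSubmonoidClosure (T : Finset (ι → ℤ))
    (hT : AddSubgroup.closure (T : Set (ι → ℤ)) = ⊤) :
    ∃ z ∈ AddSubmonoid.closure (T : Set (ι → ℤ)), ∀ w : ι → ℤ,
      intToEuclidean (w - z) ∈
        closure
          (PointedCone.hull ℝ (intToEuclidean '' (T : Set (ι → ℤ))) : Set (EuclideanSpace ℝ ι)) →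
      w ∈ AddSubmonoid.closure (T : Set (ι → ℤ)) := by
  classical
  set M := AddSubmonoid.closure (T : Set (ι → ℤ))
  set r := ∑ t ∈ T, ‖intToEuclidean t‖ + 1
  have hM : AddSubgroup.closure (M : Set (ι → ℤ)) = ⊤ :=
    eq_top_mono (AddSubgroup.closure_mono AddSubmonoid.subset_closure) hT
  obtain ⟨z, hz, hzF⟩ := M.exists_add_mem_of_subset_addSubgroupClosure
    (Fintype.piFinset fun _ => Finset.Icc (-⌈r⌉) ⌈r⌉) (by simp [hM])
  refine ⟨z, hz, fun w hw => ?_⟩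
  obtain ⟨y, hy, hwy⟩ := exists_mem_addSubmonoidClosure_norm_sub_lt T hw
  have hbox := mem_piFinset_Icc_of_norm_intToEuclidean_le (w := w - z - y) (r := r)
    (by simpa only [map_sub] using hwy.le)
  simpa only [show z + (w - z - y) + y = w by abel] using M.add_mem (hzF _ hbox) hy

theorem exists_shifted_cone_subset_addSubsemigroupClosure [Nonempty ι] (S : Finset (ι → ℕ))
    (hgen : AddSubgroup.closure
      ((Nat.castAddMonoidHom ℤ).compLeft ι '' AddSubsemigroup.closure (S : Set (ι → ℕ))) = ⊤) :
    ∃ z ∈ AddSubsemigroup.closure (S : Set (ι → ℕ)), ∀ w : ι → ℤ,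
      intToEuclidean (w - (Nat.castAddMonoidHom ℤ).compLeft ι z) ∈
        closure (PointedCone.hull ℝ (intToEuclidean '' ((Nat.castAddMonoidHom ℤ).compLeft ι '' S)) :
          Set (EuclideanSpace ℝ ι)) →
      ∃ a ∈ AddSubsemigroup.closure (S : Set (ι → ℕ)),
        (Nat.castAddMonoidHom ℤ).compLeft ι a = w := by
  set Γ := AddSubsemigroup.closure (S : Set (ι → ℕ))
  set c := (Nat.castAddMonoidHom ℤ).compLeft ι
  set T := S.image c
  have hMT : (AddSubmonoid.closure (S : Set (ι → ℕ))).map c =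
      AddSubmonoid.closure (T : Set (ι → ℤ)) := by
    rw [AddMonoidHom.map_mclosure, Finset.coe_image]
  have hT : AddSubgroup.closure (T : Set (ι → ℤ)) = ⊤ := by
    refine eq_top_mono ((AddSubgroup.closure_le _).2 ?_) hgen
    rintro _ ⟨γ, hγ, rfl⟩
    exact AddSubgroup.le_closure_toAddSubmonoid _ <| hMT ▸
      AddSubmonoid.mem_map_of_mem c (AddSubsemigroup.closure_subset_addSubmonoidClosure _ hγ)
  obtain ⟨g, hg⟩ : (Γ : Set (ι → ℕ)).Nonempty := by
    refine nonempty_iff_ne_empty.2 fun hΓ => ?_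
    rw [hΓ, image_empty, AddSubgroup.closure_empty] at hgen
    exact bot_ne_top hgen
  obtain ⟨z, hz, hzw⟩ := exists_shifted_cone_subset_addSubmonoidClosure T hT
  obtain ⟨m, hm, rfl⟩ := hMT ▸ hz
  refine ⟨g + m, AddSubsemigroup.closure_add_mem_of_mem_addSubmonoidClosure hg hm,
    fun w hw => ?_⟩
  obtain ⟨m', hm', hm'w⟩ := hMT ▸ hzw (w - c g) (by rwa [Finset.coe_image, sub_sub, ← map_add])
  exact ⟨g + m', AddSubsemigroup.closure_add_mem_of_mem_addSubmonoidClosure hg hm',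
    by rw [map_add, hm'w, add_sub_cancel]⟩

end Lattice

theorem toR_eq_intToEuclidean (n : ℕ) (α : Fin (n + 1) → ℕ) :
    toR n α = intToEuclidean ((Nat.castAddMonoidHom ℤ).compLeft (Fin (n + 1)) α) := by
  ext; simp [toR, intToEuclidean]

theorem subset_closedConvexCone (n : ℕ) (S : Set (EuclideanSpace ℝ (Fin (n + 1)))) :
    S ⊆ closedConvexCone n S :=
  fun _ hx _ hC => hC.1 hx

theorem closedConvexCone_subset_closure {n : ℕ} {S : Set (EuclideanSpace ℝ (Fin (n + 1)))}
    (K : PointedCone ℝ (EuclideanSpace ℝ (Fin (n + 1)))) (hS : S ⊆ K) :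
    closedConvexCone n S ⊆ closure K :=
  sInter_subset_of_mem ⟨hS.trans subset_closure, isClosed_closure, K.convex.closure,
    fun _ hc _ hx => K.closure.smul_mem hc hx⟩

theorem closedConvexCone_subset_closure_hull (n : ℕ) (S : Set (Fin (n + 1) → ℕ)) :
    closedConvexCone n (toR n '' AddSubsemigroup.closure S) ⊆
      closure (PointedCone.hull ℝ
        (intToEuclidean '' ((Nat.castAddMonoidHom ℤ).compLeft (Fin (n + 1)) '' S)) :
          Set (EuclideanSpace ℝ (Fin (n + 1)))) := by
  refine closedConvexCone_subset_closure _ ?_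
  rintro _ ⟨γ, hγ, rfl⟩
  rw [toR_eq_intToEuclidean, image_image]
  exact image_addSubmonoidClosure_subset_hull
    (intToEuclidean.comp ((Nat.castAddMonoidHom ℤ).compLeft (Fin (n + 1)))) _
    ⟨γ, AddSubsemigroup.closure_subset_addSubmonoidClosure _ hγ, rfl⟩

/-- **Khovanskii's theorem.** If `Γ ⊆ ℕ^{n+1}` is a finitely generated subsemigroup
generating `ℤ^{n+1}` as a group, then there is `z ∈ Σ(Γ)` with
`(z + Σ(Γ)) ∩ ℤ^{n+1} ⊆ Γ`. -/
theorem khovanskii (n : ℕ) (Γ : AddSubsemigroup (Fin (n + 1) → ℕ))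
    (hfg : ∃ S : Finset (Fin (n + 1) → ℕ),
      AddSubsemigroup.closure (S : Set (Fin (n + 1) → ℕ)) = Γ)
    (hgen : AddSubgroup.closure
      ((fun α : Fin (n + 1) → ℕ => fun i => (α i : ℤ)) '' (Γ : Set (Fin (n + 1) → ℕ))) = ⊤) :
    ∃ z ∈ closedConvexCone n (toR n '' (Γ : Set (Fin (n + 1) → ℕ))),
      ∀ w : Fin (n + 1) → ℤ,
        (show EuclideanSpace ℝ (Fin (n + 1)) from WithLp.toLp 2 (fun i => (w i : ℝ))) ∈
          (fun y => z + y) '' closedConvexCone n (toR n '' (Γ : Set (Fin (n + 1) → ℕ))) →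
        ∃ a ∈ Γ, ∀ i, (a i : ℤ) = w i := by
  obtain ⟨S, rfl⟩ := hfg
  obtain ⟨z, hz, hzw⟩ := exists_shifted_cone_subset_addSubsemigroupClosure S hgen
  refine ⟨toR n z, subset_closedConvexCone _ _ (mem_image_of_mem _ hz), ?_⟩
  rintro w ⟨x, hx, hxw⟩
  have hw : intToEuclidean w = toR n z + x := hxw.symm
  have hwz : intToEuclidean (w - (Nat.castAddMonoidHom ℤ).compLeft (Fin (n + 1)) z) = x := by
    rw [map_sub, ← toR_eq_intToEuclidean, hw, add_sub_cancel_left]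
  obtain ⟨a, ha, haw⟩ := hzw w (hwz ▸ closedConvexCone_subset_closure_hull n S hx)
  exact ⟨a, ha, congrFun haw⟩
end

section
/- Let Γ ⊆ ℕ^{n+1} be a finitely generated subsemigroup which generates ℤ^{n+1} as a group, and suppose the Okounkov body Δ(Γ) is bounded. Then there exists a constant C > 0 such that for every integer k ≥ 1: if α ∈ Δ(Γ) ∩ ((1/k)ℤ)^n and the (Euclidean) distance from α to the frontier of Δ(Γ) is greater than C/k, then α ∈ Δ_k(Γ). -/
open Set Metric

/-- The vector `(α, t) ∈ ℝ^{n+1}` obtained from `α ∈ ℝ^n` by appending `t`. -/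
noncomputable def embSnoc (n : ℕ) (α : EuclideanSpace ℝ (Fin n)) (t : ℝ) :
    EuclideanSpace ℝ (Fin (n + 1)) :=
  WithLp.toLp 2 (Fin.snoc (show Fin n → ℝ from α) t)

/-- The Okounkov body `Δ(Γ) := {α ∈ ℝ^n : (α,1) ∈ Σ(Γ)}` of a semigroup `Γ ⊆ ℕ^{n+1}`. -/
def OkounkovBody (n : ℕ) (Γ : Set (Fin (n + 1) → ℕ)) : Set (EuclideanSpace ℝ (Fin n)) :=
  {α | embSnoc n α 1 ∈ closedConvexCone n (toR n '' Γ)}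

/-- `Δ_k(Γ) := {α ∈ ℝ^n : (kα, k) ∈ Γ}`. -/
def DeltaK (n : ℕ) (Γ : Set (Fin (n + 1) → ℕ)) (k : ℕ) : Set (EuclideanSpace ℝ (Fin n)) :=
  {α | ∃ a ∈ Γ, toR n a = embSnoc n ((k : ℝ) • α) (k : ℝ)}

/-!
Write `Γ = ⟨S⟩` with `S` finite and `M` for the monoid it generates. Since `Γ` generates
`ℤ^{n+1}`, one `q ∈ ℕ^{n+1}` satisfies `q + w ∈ M` for every integer vector `w` in a box
`|wᵢ| ≤ B` with `B > ∑ s ∈ S, ‖s‖`. If `α` lies at depth more than `C/k` in `Δ(Γ)`, then even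
`(kα, k) - q` lies in `Σ(Γ)`, which is contained in the closed cone spanned by `S`. Rounding down
the coefficients of a conic combination of `S` close to `(kα, k) - q` gives `z₀ ∈ M` such that
`w := (kα, k) - q - z₀` lies in the box, hence `(kα, k) = z₀ + (q + w) ∈ M`.
-/
section Geometry

theorem infDist_frontier_le_of_subset_closedBall {E : Type*} [PseudoMetricSpace E] {S : Set E}
    {c x : E} {ρ : ℝ} (hS : S ⊆ closedBall c ρ) (hx : x ∈ S) :
    infDist x (frontier S) ≤ 2 * ρ := by
  have hxρ : dist x c ≤ ρ := hS hx
  rcases (frontier S).eq_empty_or_nonempty with h | ⟨y, hy⟩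
  · rw [h, infDist_empty]
    linarith [dist_nonneg (x := x) (y := c)]
  · have hyρ : dist y c ≤ ρ :=
      closure_minimal hS isClosed_closedBall (frontier_subset_closure hy)
    calc infDist x (frontier S) ≤ dist x y := infDist_le_dist_of_mem hy
      _ ≤ dist x c + dist y c := dist_triangle_right x y c
      _ ≤ 2 * ρ := by linarith

variable {E : Type*} [NormedAddCommGroup E] [NormedSpace ℝ E]

theorem ball_infDist_frontier_subset {S : Set E} {x : E} (hx : x ∈ S) :
    ball x (infDist x (frontier S)) ⊆ S := by
  intro y hy
  have hnotfr : ∀ z ∈ ball x (infDist x (frontier S)), z ∉ frontier S := fun z hz =>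
    notMem_of_dist_lt_infDist (by rwa [dist_comm, ← mem_ball])
  have hxint : x ∈ interior S := by
    rw [← self_sdiff_frontier]
    exact ⟨hx, hnotfr x (mem_ball_self (pos_of_mem_ball hy))⟩
  refine interior_subset <| (convex_ball x _).isPreconnected.subset_of_closure_inter_subset
    isOpen_interior ⟨x, mem_ball_self (pos_of_mem_ball hy), hxint⟩ ?_ hy
  rintro z ⟨hzcl, hzball⟩
  rw [← closure_sdiff_frontier]
  exact ⟨closure_mono interior_subset hzcl, hnotfr z hzball⟩

end Geometry

section Cone

variable {n : ℕ}

theorem smul_mem_closedConvexCone {S : Set (EuclideanSpace ℝ (Fin (n + 1)))} {c : ℝ} (hc : 0 ≤ c)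
    {x : EuclideanSpace ℝ (Fin (n + 1))} (hx : x ∈ closedConvexCone n S) :
    c • x ∈ closedConvexCone n S :=
  fun _ hC => hC.2.2.2 c hc _ (hx _ hC)

theorem closedConvexCone_subset_pointedCone {S : Set (EuclideanSpace ℝ (Fin (n + 1)))}
    {K : PointedCone ℝ (EuclideanSpace ℝ (Fin (n + 1)))}
    (hK : IsClosed (K : Set (EuclideanSpace ℝ (Fin (n + 1))))) (hSK : S ⊆ K) : closedConvexCone n S ⊆ K :=
  fun _ hx => hx K ⟨hSK, hK, K.convex, fun _ hc _ hy => K.smul_mem hc hy⟩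

theorem embSnoc_sub (x y : EuclideanSpace ℝ (Fin n)) (s t : ℝ) :
    embSnoc n x s - embSnoc n y t = embSnoc n (x - y) (s - t) := by
  ext i
  refine Fin.lastCases ?_ (fun i => ?_) i <;> simp [embSnoc]

theorem smul_embSnoc (c : ℝ) (x : EuclideanSpace ℝ (Fin n)) (t : ℝ) :
    c • embSnoc n x t = embSnoc n (c • x) (c * t) := by
  ext i
  refine Fin.lastCases ?_ (fun i => ?_) i <;> simp [embSnoc]

theorem exists_embSnoc_eq (v : EuclideanSpace ℝ (Fin (n + 1))) :
    ∃ a s, ‖a‖ ≤ ‖v‖ ∧ |s| ≤ ‖v‖ ∧ embSnoc n a s = v := by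
  refine ⟨WithLp.toLp 2 fun i => v (Fin.castSucc i), v (Fin.last n), ?_,
    PiLp.norm_apply_le v _, ?_⟩
  · rw [EuclideanSpace.norm_eq, EuclideanSpace.norm_eq, Fin.sum_univ_castSucc]
    exact Real.sqrt_le_sqrt (le_add_of_nonneg_right (sq_nonneg _))
  · ext i
    refine Fin.lastCases ?_ (fun i => ?_) i <;> simp [embSnoc]

end Cone

section Okounkov

variable {n : ℕ} {Γ : Set (Fin (n + 1) → ℕ)}

theorem embSnoc_mem_closedConvexCone {x : EuclideanSpace ℝ (Fin n)} {t : ℝ} (ht : 0 < t)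
    (hx : t⁻¹ • x ∈ OkounkovBody n Γ) : embSnoc n x t ∈ closedConvexCone n (toR n '' Γ) := by
  have h := smul_mem_closedConvexCone ht.le hx
  rwa [smul_embSnoc, smul_inv_smul₀ ht.ne', mul_one] at h

/-- The ray through `(kα, k) - v` meets height `1` at a point within `r (ρ + 1) / (k - r)`
of `α`. -/
theorem embSnoc_sub_mem_closedConvexCone {α : EuclideanSpace ℝ (Fin n)} {ρ r k : ℝ}
    (hα : α ∈ OkounkovBody n Γ) (hαρ : ‖α‖ ≤ ρ) {v : EuclideanSpace ℝ (Fin (n + 1))}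
    (hv : ‖v‖ ≤ r) (hrk : r < k)
    (hd : r * (ρ + 1) / (k - r) < infDist α (frontier (OkounkovBody n Γ))) :
    embSnoc n (k • α) k - v ∈ closedConvexCone n (toR n '' Γ) := by
  obtain ⟨a, s, ha, hs, rfl⟩ := exists_embSnoc_eq v
  have hsr := abs_le.1 (hs.trans hv)
  have ht : 0 < k - s := by linarith
  rw [embSnoc_sub]
  refine embSnoc_mem_closedConvexCone ht (ball_infDist_frontier_subset hα ?_)
  have hshift : (k - s)⁻¹ • (k • α - a) - α = (k - s)⁻¹ • (s • α - a) := by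
    rw [eq_inv_smul_iff₀ ht.ne', smul_sub, smul_inv_smul₀ ht.ne']
    module
  have hnum : ‖s • α - a‖ ≤ r * (ρ + 1) :=
    calc ‖s • α - a‖ ≤ |s| * ‖α‖ + ‖a‖ := by
          simpa only [norm_smul, Real.norm_eq_abs] using norm_sub_le (s • α) a
      _ ≤ r * ρ + r := by gcongr <;> linarith [norm_nonneg α]
      _ = r * (ρ + 1) := by ring
  rw [mem_ball, dist_eq_norm, hshift, norm_smul, norm_inv, Real.norm_of_nonneg ht.le,
    inv_mul_eq_div]
  exact (div_le_div₀ ((norm_nonneg _).trans hnum) hnum (by linarith) (by linarith)).trans_lt hd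

theorem embSnoc_sub_mem_closedConvexCone_of_subset_closedBall {α : EuclideanSpace ℝ (Fin n)}
    {ρ r k : ℝ} (hΔ : OkounkovBody n Γ ⊆ closedBall 0 ρ) (hα : α ∈ OkounkovBody n Γ)
    {v : EuclideanSpace ℝ (Fin (n + 1))} (hv : ‖v‖ ≤ r) (hr : 0 < r) (hk : 0 < k)
    (hd : 4 * r * (ρ + 1) / k < infDist α (frontier (OkounkovBody n Γ))) :
    embSnoc n (k • α) k - v ∈ closedConvexCone n (toR n '' Γ) := by
  have hαρ : ‖α‖ ≤ ρ := mem_closedBall_zero_iff.1 (hΔ hα)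
  have hρ : 0 ≤ ρ := (norm_nonneg α).trans hαρ
  -- depths in `Δ(Γ)` are at most `2ρ`, so `hd` forces `k > 2r`
  have hkr : 2 * r < k := by
    have h := hd.trans_le (infDist_frontier_le_of_subset_closedBall hΔ hα)
    rw [div_lt_iff₀ hk] at h
    nlinarith [mul_nonneg hρ hr.le]
  refine embSnoc_sub_mem_closedConvexCone hα hαρ hv (by linarith) (lt_of_le_of_lt ?_ hd)
  rw [div_le_div_iff₀ (by linarith) hk]
  nlinarith [mul_nonneg hρ hr.le]

end Okounkov

section Absorbing

variable {G : Type*} [AddCommGroup G] {T : Set G}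

theorem exists_add_mem_addSubmonoidClosure {w : G} (hw : w ∈ AddSubgroup.closure T) :
    ∃ q ∈ AddSubmonoid.closure T, q + w ∈ AddSubmonoid.closure T := by
  induction hw using AddSubgroup.closure_induction with
  | mem w hw => exact ⟨0, zero_mem _, by simpa using AddSubmonoid.subset_closure hw⟩
  | zero => exact ⟨0, zero_mem _, by simp⟩
  | add w w' _ _ ih ih' =>
    obtain ⟨q, hq, hqw⟩ := ih
    obtain ⟨q', hq', hqw'⟩ := ih'
    exact ⟨q + q', add_mem hq hq', by simpa only [add_add_add_comm] using add_mem hqw hqw'⟩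
  | neg w _ ih =>
    obtain ⟨q, hq, hqw⟩ := ih
    exact ⟨q + w, hqw, by simpa using hq⟩

theorem exists_add_mem_addSubmonoidClosure_forall (hT : AddSubgroup.closure T = ⊤)
    (W : Finset G) : ∃ q ∈ AddSubmonoid.closure T, ∀ w ∈ W, q + w ∈ AddSubmonoid.closure T := by
  classical
  induction W using Finset.induction_on with
  | empty => exact ⟨0, zero_mem _, by simp⟩
  | insert w W _ ih =>
    obtain ⟨q, hq, hqW⟩ := ih
    obtain ⟨q', hq', hqw⟩ := exists_add_mem_addSubmonoidClosure (hT ▸ AddSubgroup.mem_top w)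
    refine ⟨q + q', add_mem hq hq', (Finset.forall_mem_insert _ _ _).2 ⟨?_, fun w' hw' => ?_⟩⟩
    · simpa only [add_assoc] using add_mem hq hqw
    · simpa only [add_right_comm] using add_mem (hqW w' hw') hq'

end Absorbing

theorem AddSubsemigroup.mem_of_mem_addSubmonoidClosure {M : Type*} [AddMonoid M]
    (Γ : AddSubsemigroup M) {x : M} (hx : x ∈ AddSubmonoid.closure (Γ : Set M)) (hx0 : x ≠ 0) :
    x ∈ Γ := by
  induction hx using AddSubmonoid.closure_induction with
  | mem x hx => exact hx
  | zero => exact absurd rfl hx0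
  | add x y _ _ ihx ihy =>
    rcases eq_or_ne x 0 with rfl | hx
    · simpa using ihy (by simpa using hx0)
    rcases eq_or_ne y 0 with rfl | hy
    · simpa using ihx (by simpa using hx0)
    exact add_mem (ihx hx) (ihy hy)

def natCastPiHom (ι : Type*) : (ι → ℕ) →+ (ι → ℤ) := (Nat.castAddMonoidHom ℤ).compLeft ι

theorem natCastPiHom_apply {ι : Type*} (a : ι → ℕ) (i : ι) : natCastPiHom ι a i = a i := rfl

theorem exists_natCastPiHom_add_mem {ι : Type*} {Γ : Set (ι → ℕ)}
    (hΓ : AddSubgroup.closure (natCastPiHom ι '' Γ) = ⊤) (W : Finset (ι → ℤ)) :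
    ∃ q : ι → ℕ, ∀ w ∈ W, natCastPiHom ι q + w ∈ (AddSubmonoid.closure Γ).map (natCastPiHom ι) := by
  obtain ⟨q, hq, hqW⟩ := exists_add_mem_addSubmonoidClosure_forall hΓ W
  rw [← AddMonoidHom.map_mclosure] at hq hqW
  obtain ⟨q, -, rfl⟩ := hq
  exact ⟨q, hqW⟩

section Lattice

variable {n : ℕ}

theorem toR_add (a b : Fin (n + 1) → ℕ) : toR n (a + b) = toR n a + toR n b := by
  ext i
  simp [toR]

theorem image_toR_subset_hull (S : Set (Fin (n + 1) → ℕ)) :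
    toR n '' AddSubsemigroup.closure S ⊆ PointedCone.hull ℝ (toR n '' S) := by
  rintro _ ⟨a, ha, rfl⟩
  induction ha using AddSubsemigroup.closure_induction with
  | mem a ha => exact PointedCone.subset_hull (mem_image_of_mem _ ha)
  | add a b _ _ iha ihb => exact toR_add a b ▸ add_mem iha ihb

/-- Round down the coefficients of a nearby conic combination of `S`. -/
theorem exists_mem_closure_norm_sub_lt (S : Finset (Fin (n + 1) → ℕ))
    {x : EuclideanSpace ℝ (Fin (n + 1))}
    (hx : x ∈ closure (PointedCone.hull ℝ (toR n '' S) : Set (EuclideanSpace ℝ (Fin (n + 1))))) :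
    ∃ z ∈ AddSubmonoid.closure (S : Set (Fin (n + 1) → ℕ)),
      ‖x - toR n z‖ < ∑ s ∈ S, ‖toR n s‖ + 1 := by
  obtain ⟨y, hy, hxy⟩ := Metric.mem_closure_iff.1 hx 1 one_pos
  rw [SetLike.mem_coe, image_eq_range, Submodule.mem_span_range_iff_exists_fun] at hy
  obtain ⟨c, rfl⟩ := hy
  refine ⟨∑ s, ⌊(c s : ℝ)⌋₊ • (s : Fin (n + 1) → ℕ),
    sum_mem fun s _ => nsmul_mem (AddSubmonoid.subset_closure s.2) _, ?_⟩
  have hfrac : (∑ s, c s • toR n s) -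
      toR n (∑ s, ⌊(c s : ℝ)⌋₊ • (s : Fin (n + 1) → ℕ)) =
      ∑ s, ((c s : ℝ) - ⌊(c s : ℝ)⌋₊) • toR n s := by
    ext i
    simp [toR, Finset.sum_apply, sub_mul, ← Nonneg.coe_smul]
  have hround : ‖∑ s, ((c s : ℝ) - ⌊(c s : ℝ)⌋₊) • toR n s‖ ≤ ∑ s ∈ S, ‖toR n s‖ := by
    rw [← Finset.sum_coe_sort S]
    refine (norm_sum_le _ _).trans (Finset.sum_le_sum fun s _ => ?_)
    rw [norm_smul, Real.norm_of_nonneg (sub_nonneg.2 (Nat.floor_le (c s).2))]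
    exact mul_le_of_le_one_left (norm_nonneg _)
      (by linarith [Nat.lt_floor_add_one (c s : ℝ)])
  calc ‖x - toR n (∑ s, ⌊(c s : ℝ)⌋₊ • (s : Fin (n + 1) → ℕ))‖
      ≤ dist x (∑ s, c s • toR n s) + ‖∑ s, ((c s : ℝ) - ⌊(c s : ℝ)⌋₊) • toR n s‖ := by
        rw [← hfrac, dist_eq_norm]
        exact norm_sub_le_norm_sub_add_norm_sub _ _ _
    _ < ∑ s ∈ S, ‖toR n s‖ + 1 := by linarith

/-- If `z₀ ∈ M` rounds `x - q`, then `w := x - q - z₀` is an integer vector in the box, and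
`x = z₀ + (q + w)`. -/
theorem exists_mem_toR_eq_of_sub_mem_closure_hull {S : Finset (Fin (n + 1) → ℕ)}
    {M : AddSubmonoid (Fin (n + 1) → ℕ)} (hSM : (S : Set (Fin (n + 1) → ℕ)) ⊆ M) {B : ℤ}
    (hB : ∑ s ∈ S, ‖toR n s‖ + 1 ≤ B) {q : Fin (n + 1) → ℕ}
    (hq : ∀ w ∈ Fintype.piFinset fun _ => Finset.Icc (-B) B,
      natCastPiHom _ q + w ∈ M.map (natCastPiHom _))
    {x : EuclideanSpace ℝ (Fin (n + 1))} (hx : ∀ i, ∃ m : ℤ, (m : ℝ) = x i)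
    (hxq : x - toR n q ∈
      closure (PointedCone.hull ℝ (toR n '' S) : Set (EuclideanSpace ℝ (Fin (n + 1))))) :
    ∃ z ∈ M, toR n z = x := by
  choose m hm using hx
  obtain ⟨z₀, hz₀, hz₀x⟩ := exists_mem_closure_norm_sub_lt S hxq
  set w := m - natCastPiHom _ q - natCastPiHom _ z₀
  have hw : w ∈ Fintype.piFinset fun _ => Finset.Icc (-B) B := by
    simp only [Fintype.mem_piFinset, Finset.mem_Icc, ← abs_le]
    intro i
    have hwi : (w i : ℝ) = (x - toR n q - toR n z₀) i := by
      simp [w, ← hm, toR, natCastPiHom_apply]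
    have : |(w i : ℝ)| < B := by
      rw [hwi]
      exact ((PiLp.norm_apply_le _ i).trans_lt hz₀x).trans_le hB
    exact_mod_cast this.le
  have hmM : m ∈ M.map (natCastPiHom _) := by
    have h := add_mem (AddSubmonoid.mem_map_of_mem _ (AddSubmonoid.closure_le.2 hSM hz₀)) (hq w hw)
    rwa [show natCastPiHom _ z₀ + (natCastPiHom _ q + w) = m by simp only [w]; abel] at h
  obtain ⟨z, hzM, hzm⟩ := hmM
  refine ⟨z, hzM, ?_⟩
  ext i
  simp [toR, ← hm, ← hzm, natCastPiHom_apply]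

end Lattice

theorem embSnoc_natCast_smul_apply_eq_intCast {n k : ℕ} (hk : k ≠ 0)
    {α : EuclideanSpace ℝ (Fin n)} (hα : ∀ i, ∃ m : ℤ, α i = (m : ℝ) / (k : ℝ)) (i : Fin (n + 1)) :
    ∃ m : ℤ, (m : ℝ) = embSnoc n ((k : ℝ) • α) (k : ℝ) i := by
  refine Fin.lastCases ⟨k, by simp [embSnoc]⟩ (fun i => ?_) i
  obtain ⟨m, hm⟩ := hα i
  exact ⟨m, by simp [embSnoc, hm]; field_simp⟩

/-- Lattice points of `Δ(Γ)` lying at distance greater than `C/k` from the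
boundary belong to `Δ_k(Γ)`. -/
theorem lattice_points_in_DeltaK (n : ℕ) (Γ : AddSubsemigroup (Fin (n + 1) → ℕ))
    (hfg : ∃ S : Finset (Fin (n + 1) → ℕ),
      AddSubsemigroup.closure (S : Set (Fin (n + 1) → ℕ)) = Γ)
    (hgen : AddSubgroup.closure
      ((fun α : Fin (n + 1) → ℕ => fun i => (α i : ℤ)) '' (Γ : Set (Fin (n + 1) → ℕ))) = ⊤)
    (hbdd : Bornology.IsBounded (OkounkovBody n (Γ : Set (Fin (n + 1) → ℕ)))) :
    ∃ C : ℝ, 0 < C ∧ ∀ k : ℕ, 1 ≤ k →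
      ∀ α : EuclideanSpace ℝ (Fin n),
        α ∈ OkounkovBody n (Γ : Set (Fin (n + 1) → ℕ)) →
        (∀ i, ∃ m : ℤ, α i = (m : ℝ) / (k : ℝ)) →
        C / (k : ℝ) < infDist α (frontier (OkounkovBody n (Γ : Set (Fin (n + 1) → ℕ)))) →
        α ∈ DeltaK n (Γ : Set (Fin (n + 1) → ℕ)) k := by
  obtain ⟨S, rfl⟩ := hfg
  obtain ⟨ρ, hρ, hΔ⟩ := hbdd.subset_closedBall_lt 0 0
  set B : ℤ := ⌈∑ s ∈ S, ‖toR n s‖⌉ + 1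
  obtain ⟨q, hq⟩ := exists_natCastPiHom_add_mem hgen (Fintype.piFinset fun _ => Finset.Icc (-B) B)
  refine ⟨4 * (‖toR n q‖ + 1) * (ρ + 1), by positivity, fun k hk α hα hαk hd => ?_⟩
  have hk0 : (0 : ℝ) < k := by exact_mod_cast hk
  have hcone := embSnoc_sub_mem_closedConvexCone_of_subset_closedBall hΔ hα
    (le_add_of_nonneg_right zero_le_one) (by positivity) hk0 hd
  obtain ⟨z, hzM, hz⟩ := exists_mem_toR_eq_of_sub_mem_closure_hull
    (AddSubmonoid.subset_closure.trans' AddSubsemigroup.subset_closure)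
    (by push_cast [B]; linarith [Int.le_ceil (∑ s ∈ S, ‖toR n s‖)]) hq
    (embSnoc_natCast_smul_apply_eq_intCast (by omega) hαk)
    (closedConvexCone_subset_pointedCone (K := (PointedCone.hull ℝ (toR n '' S)).closure)
      isClosed_closure ((image_toR_subset_hull _).trans subset_closure) hcone)
  refine ⟨z, AddSubsemigroup.mem_of_mem_addSubmonoidClosure _ hzM ?_, hz⟩
  rintro rfl
  have h0 := congrArg (· (Fin.last n)) hz
  simp only [toR, embSnoc, Pi.zero_apply, Nat.cast_zero, WithLp.ofLp_smul, Fin.snoc_last] at h0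
  exact hk0.ne h0
end

section
/- (Zaharjuta) Let F : ℕ^{n+1} → ℝ be subadditive and suppose there is a linear function λ : ℝ^{n+1} → ℝ with F(α) ≥ λ(α) for all α ∈ ℕ^{n+1}. Then there exists a function c[F] : Σ^0 → ℝ such that: (i) for every θ ∈ Σ^0 and every sequence α(k) ∈ ℕ^{n+1} with |α(k)| → ∞ and α(k)/|α(k)| → θ, one has F(α(k))/|α(k)| → c[F](θ); and (ii) c[F] is convex on Σ^0. -/
/-!
Subtracting the linear minorant reduces the theorem to a subadditive `G ≥ 0`, which grows at
most linearly: `G γ ≤ G 0 + M |γ|`. Fix a direction `θ` with positive coordinates and a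
lattice point `B` whose direction lies in a small cone around `θ`. Far out in direction `θ`,
every `α` dominates `q • B` with `q |B| ≈ (1 - δ) |α|`, so subadditivity gives
`G α ≤ q G B + G 0 + M (|α| - q |B|)`. Letting `|α| → ∞` and then `δ → 0`, the `limsup` of
`G α / |α|` along one sequence tending to `θ` is at most the `liminf` along any other, so all
these limits agree. Convexity follows from `G (a + b) ≤ G a + G b` applied to lattice
approximations `a ≈ k t x`, `b ≈ k u y`.
-/

open Set Filter

/-- `Σ^0 := {x ∈ ℝ^{n+1} : |x| = 1, all coordinates strictly positive}`. -/
def Sigma0 (n : ℕ) : Set (EuclideanSpace ℝ (Fin (n + 1))) :=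
  {x | (∑ i, x i) = 1 ∧ ∀ i, 0 < x i}

open Topology

namespace Zaharjuta

section AddCommMonoid

variable {M ι : Type*} [AddCommMonoid M] {G : M → ℝ}

theorem apply_add_nsmul_le (hsub : ∀ a b, G (a + b) ≤ G a + G b) (x y : M) (m : ℕ) :
    G (x + m • y) ≤ G x + m * G y := by
  induction m with
  | zero => simp
  | succ m ih =>
    calc G (x + (m + 1) • y) = G ((x + m • y) + y) := by rw [succ_nsmul, add_assoc]
      _ ≤ G (x + m • y) + G y := hsub _ _
      _ ≤ G x + (m + 1 : ℕ) * G y := by push_cast; linarith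

theorem apply_add_sum_nsmul_le (hsub : ∀ a b, G (a + b) ≤ G a + G b) (x : M) (s : Finset ι)
    (m : ι → ℕ) (v : ι → M) :
    G (x + ∑ i ∈ s, m i • v i) ≤ G x + ∑ i ∈ s, m i * G (v i) := by
  classical
  induction s using Finset.induction_on with
  | empty => simp
  | insert a s ha ih =>
    rw [Finset.sum_insert ha, Finset.sum_insert ha, add_left_comm, add_comm (m a • v a)]
    calc G (x + ∑ i ∈ s, m i • v i + m a • v a)
        ≤ G (x + ∑ i ∈ s, m i • v i) + m a * G (v a) := apply_add_nsmul_le hsub _ _ _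
      _ ≤ G x + (m a * G (v a) + ∑ i ∈ s, m i * G (v i)) := by linarith

end AddCommMonoid

variable {ι : Type*}

noncomputable def ceilSeq (v : ι → ℝ) (k : ℕ) : ι → ℕ := fun i => ⌈v i * k⌉₊

theorem tendsto_ceilSeq_div {v : ι → ℝ} (hv : ∀ i, 0 ≤ v i) (i : ι) :
    Tendsto (fun k => (ceilSeq v k i : ℝ) / k) atTop (𝓝 (v i)) :=
  (tendsto_nat_ceil_mul_div_atTop (hv i)).comp tendsto_natCast_atTop_atTop

variable [Fintype ι]

noncomputable def size (γ : ι → ℕ) : ℝ := ∑ i, (γ i : ℝ)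

theorem size_nsmul (q : ℕ) (γ : ι → ℕ) : size (q • γ) = q * size γ := by
  simp [size, Finset.mul_sum]

theorem size_sub {γ δ : ι → ℕ} (h : δ ≤ γ) : size (γ - δ) = size γ - size δ := by
  simp [size, Nat.cast_sub (h _), Finset.sum_sub_distrib]

variable {G : (ι → ℕ) → ℝ}

theorem exists_le_add_mul_size (hsub : ∀ a b, G (a + b) ≤ G a + G b) (hpos : ∀ a, 0 ≤ G a) :
    ∃ M, ∀ γ, G γ ≤ G 0 + M * size γ := by
  classical
  refine ⟨∑ j, G (Pi.single j 1), fun γ => ?_⟩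
  have hγ : γ = ∑ i, γ i • Pi.single i 1 := by
    conv_lhs => rw [← Finset.univ_sum_single γ]
    simp [← Pi.single_smul]
  calc G γ ≤ G 0 + ∑ i, γ i * G (Pi.single i 1) := by
        have := apply_add_sum_nsmul_le hsub 0 Finset.univ γ (fun i => Pi.single i 1)
        rwa [zero_add, ← hγ] at this
    _ ≤ G 0 + ∑ i, γ i * ∑ j, G (Pi.single j 1) := by
        gcongr with i
        exact Finset.single_le_sum (f := fun j => G (Pi.single j 1)) (fun j _ => hpos _)
          (Finset.mem_univ i)
    _ = G 0 + (∑ j, G (Pi.single j 1)) * size γ := by rw [size, Finset.mul_sum]; simp [mul_comm]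

theorem apply_le_of_nsmul_le (hsub : ∀ a b, G (a + b) ≤ G a + G b) {M : ℝ}
    (hM : ∀ γ, G γ ≤ G 0 + M * size γ) {A B : ι → ℕ} {q : ℕ} (h : q • B ≤ A) :
    G A ≤ q * G B + G 0 + M * (size A - q * size B) := by
  have hA : A = (A - q • B) + q • B := (tsub_add_cancel_of_le h).symm
  calc G A ≤ G (A - q • B) + q * G B := by
        conv_lhs => rw [hA]
        exact apply_add_nsmul_le hsub _ _ _
    _ ≤ q * G B + G 0 + M * (size A - q * size B) := by
        have := hM (A - q • B)
        rw [size_sub h, size_nsmul] at this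
        linarith

structure TendstoInDirection (θ : ι → ℝ) (α : ℕ → ι → ℕ) : Prop where
  size_tendsto : Tendsto (fun k => size (α k)) atTop atTop
  coord_div_size_tendsto : ∀ i, Tendsto (fun k => (α k i : ℝ) / size (α k)) atTop (𝓝 (θ i))

theorem eventually_ratio_mem_Icc (hpos : ∀ a, 0 ≤ G a) {M : ℝ}
    (hM : ∀ γ, G γ ≤ G 0 + M * size γ) {α : ℕ → ι → ℕ}
    (hα : Tendsto (fun k => size (α k)) atTop atTop) :
    ∀ᶠ k in atTop, G (α k) / size (α k) ∈ Icc 0 (G 0 + M) := by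
  filter_upwards [hα.eventually_ge_atTop 1] with k hk
  have hS : 0 < size (α k) := one_pos.trans_le hk
  refine ⟨div_nonneg (hpos _) hS.le, ?_⟩
  rw [div_le_iff₀ hS]
  nlinarith [hM (α k), hpos 0]

theorem isBoundedUnder_ratio (hsub : ∀ a b, G (a + b) ≤ G a + G b) (hpos : ∀ a, 0 ≤ G a)
    {α : ℕ → ι → ℕ} (hα : Tendsto (fun k => size (α k)) atTop atTop) :
    IsBoundedUnder (· ≤ ·) atTop (fun k => G (α k) / size (α k)) ∧
      IsBoundedUnder (· ≥ ·) atTop (fun k => G (α k) / size (α k)) := by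
  obtain ⟨M, hM⟩ := exists_le_add_mul_size hsub hpos
  have h := eventually_ratio_mem_Icc hpos hM hα
  exact ⟨isBoundedUnder_of_eventually_le (h.mono fun _ hk => hk.2),
    isBoundedUnder_of_eventually_ge (h.mono fun _ hk => hk.1)⟩

theorem limsup_ratio_le (hsub : ∀ a b, G (a + b) ≤ G a + G b) (hpos : ∀ a, 0 ≤ G a) {M : ℝ}
    (hM : ∀ γ, G γ ≤ G 0 + M * size γ) {θ : ι → ℝ} {α : ℕ → ι → ℕ}
    (hα : TendstoInDirection θ α) {B : ι → ℕ} (hB : 0 < size B) {δ : ℝ} (hδ : δ ≤ 1)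
    (hcone : ∀ i, (1 - δ) * (B i / size B) < θ i) :
    limsup (fun k => G (α k) / size (α k)) atTop ≤ (1 - δ) * (G B / size B) + δ * M := by
  set c := (1 - δ) / size B
  have hc : 0 ≤ c := div_nonneg (by linarith) hB.le
  set q : ℕ → ℕ := fun k => ⌊c * size (α k)⌋₊
  have hq : Tendsto (fun k => (q k : ℝ) / size (α k)) atTop (𝓝 c) :=
    (tendsto_nat_floor_mul_div_atTop hc).comp hα.size_tendsto
  have hcoord : ∀ᶠ k in atTop, ∀ i, (1 - δ) * (B i / size B) < α k i / size (α k) :=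
    eventually_all.2 fun i => (hα.coord_div_size_tendsto i).eventually (lt_mem_nhds (hcone i))
  set w : ℕ → ℝ := fun k => (q k / size (α k) * size B) * (G B / size B) +
    M * (1 - q k / size (α k) * size B) + G 0 / size (α k)
  have hw : Tendsto w atTop (𝓝 ((c * size B) * (G B / size B) + M * (1 - c * size B) + 0)) :=
    (((hq.mul_const _).mul_const _).add (tendsto_const_nhds.mul ((hq.mul_const _).const_sub _))).add
      (tendsto_const_nhds.div_atTop hα.size_tendsto)
  have hcB : c * size B = 1 - δ := div_mul_cancel₀ _ hB.ne'
  rw [hcB] at hw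
  have hle : ∀ᶠ k in atTop, G (α k) / size (α k) ≤ w k := by
    filter_upwards [hcoord, hα.size_tendsto.eventually_gt_atTop 0] with k hk hS
    have hqB : q k • B ≤ α k := fun i => by
      have hfloor : (q k : ℝ) ≤ c * size (α k) := Nat.floor_le (by positivity)
      have : (q k : ℝ) * B i < α k i := calc
        (q k : ℝ) * B i ≤ c * size (α k) * B i := by gcongr
        _ = (1 - δ) * (B i / size B) * size (α k) := by ring
        _ < α k i / size (α k) * size (α k) := by gcongr; exact hk i
        _ = α k i := div_mul_cancel₀ _ hS.ne'
      exact_mod_cast this.le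
    have := apply_le_of_nsmul_le hsub hM hqB
    rw [div_le_iff₀ hS]
    calc G (α k) ≤ q k * G B + G 0 + M * (size (α k) - q k * size B) := this
      _ = w k * size (α k) := by simp only [w]; field_simp; ring
  calc limsup (fun k => G (α k) / size (α k)) atTop ≤ limsup w atTop :=
        limsup_le_limsup hle (isBoundedUnder_ratio hsub hpos hα.size_tendsto).2.isCoboundedUnder_le
          hw.isBoundedUnder_le
    _ = (1 - δ) * (G B / size B) + δ * M := by rw [hw.limsup_eq]; ring

theorem limsup_ratio_le_liminf_ratio (hsub : ∀ a b, G (a + b) ≤ G a + G b)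
    (hpos : ∀ a, 0 ≤ G a) {θ : ι → ℝ} (hθ : ∀ i, 0 < θ i) {α β : ℕ → ι → ℕ}
    (hα : TendstoInDirection θ α) (hβ : TendstoInDirection θ β) :
    limsup (fun k => G (α k) / size (α k)) atTop ≤
      liminf (fun k => G (β k) / size (β k)) atTop := by
  obtain ⟨M, hM⟩ := exists_le_add_mul_size hsub hpos
  set L := liminf (fun k => G (β k) / size (β k)) atTop
  have hδ : ∀ δ ∈ Ioo (0 : ℝ) 1,
      limsup (fun k => G (α k) / size (α k)) atTop ≤ (1 - δ) * (L + δ) + δ * M := by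
    rintro δ ⟨hδ0, hδ1⟩
    have hcone : ∀ᶠ j in atTop, ∀ i, (1 - δ) * (β j i / size (β j)) < θ i :=
      eventually_all.2 fun i => ((hβ.coord_div_size_tendsto i).const_mul _).eventually
        (gt_mem_nhds (by nlinarith [hθ i]))
    have hsmall : ∃ᶠ j in atTop, G (β j) / size (β j) < L + δ :=
      frequently_lt_of_liminf_lt
        (isBoundedUnder_ratio hsub hpos hβ.size_tendsto).1.isCoboundedUnder_ge (by linarith)
    obtain ⟨j, hj, hjcone, hjsize⟩ :=
      (hsmall.and_eventually (hcone.and (hβ.size_tendsto.eventually_gt_atTop 0))).exists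
    calc limsup (fun k => G (α k) / size (α k)) atTop
        ≤ (1 - δ) * (G (β j) / size (β j)) + δ * M :=
          limsup_ratio_le hsub hpos hM hα hjsize hδ1.le hjcone
      _ ≤ (1 - δ) * (L + δ) + δ * M := by gcongr
  have hlim : Tendsto (fun δ : ℝ => (1 - δ) * (L + δ) + δ * M) (𝓝[>] 0) (𝓝 L) :=
    ((Continuous.tendsto' (by fun_prop) 0 L (by simp))).mono_left nhdsWithin_le_nhds
  exact ge_of_tendsto hlim (eventually_of_mem (Ioo_mem_nhdsGT zero_lt_one) hδ)

theorem tendsto_size_div_of_tendsto_coord_div {α : ℕ → ι → ℕ} {v : ι → ℝ}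
    (h : ∀ i, Tendsto (fun k => (α k i : ℝ) / k) atTop (𝓝 (v i))) :
    Tendsto (fun k => size (α k) / k) atTop (𝓝 (∑ i, v i)) := by
  simpa [size, Finset.sum_div] using tendsto_finsetSum Finset.univ fun i _ => h i

theorem TendstoInDirection.of_tendsto_coord_div {α : ℕ → ι → ℕ} {θ : ι → ℝ} (hθ : ∑ i, θ i = 1)
    {s : ℝ} (hs : 0 < s) (h : ∀ i, Tendsto (fun k => (α k i : ℝ) / k) atTop (𝓝 (s * θ i))) :
    TendstoInDirection θ α := by
  have hsize : Tendsto (fun k => size (α k) / k) atTop (𝓝 s) := by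
    simpa [← Finset.mul_sum, hθ] using tendsto_size_div_of_tendsto_coord_div h
  refine ⟨(hsize.pos_mul_atTop hs tendsto_natCast_atTop_atTop).congr' ?_, fun i => ?_⟩
  · filter_upwards [eventually_ne_atTop 0] with k hk
    exact div_mul_cancel₀ _ (Nat.cast_ne_zero.2 hk)
  · refine ((h i).div hsize hs.ne').congr' ?_ |>.trans (by rw [mul_div_cancel_left₀ _ hs.ne'])
    filter_upwards [eventually_ne_atTop 0] with k hk
    exact div_div_div_cancel_right₀ (Nat.cast_ne_zero.2 hk) _ _

def posSimplex (ι : Type*) [Fintype ι] : Set (ι → ℝ) := {x | ∑ i, x i = 1 ∧ ∀ i, 0 < x i}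

theorem convex_posSimplex : Convex ℝ (posSimplex ι) := by
  intro x hx y hy a b ha hb hab
  refine ⟨?_, fun i => ?_⟩
  · simp [Finset.sum_add_distrib, ← Finset.mul_sum, hx.1, hy.1, hab]
  · simp only [Pi.add_apply, Pi.smul_apply, smul_eq_mul]
    rcases ha.eq_or_lt with rfl | ha
    · simp only [zero_add] at hab
      simp [hab, hy.2 i]
    · have := hx.2 i
      have := hy.2 i
      positivity

theorem tendstoInDirection_ceilSeq {θ : ι → ℝ} (hθ : θ ∈ posSimplex ι) :
    TendstoInDirection θ (ceilSeq θ) :=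
  .of_tendsto_coord_div hθ.1 one_pos fun i => by
    simpa using tendsto_ceilSeq_div (fun i => (hθ.2 i).le) i

variable (G) in
/-- The paper's `c[G](θ)`, computed along the lattice points `⌈k θ⌉`. -/
noncomputable def limitRatio (θ : ι → ℝ) : ℝ :=
  limsup (fun k => G (ceilSeq θ k) / size (ceilSeq θ k)) atTop

theorem tendsto_limitRatio (hsub : ∀ a b, G (a + b) ≤ G a + G b) (hpos : ∀ a, 0 ≤ G a)
    {θ : ι → ℝ} (hθ : θ ∈ posSimplex ι) {α : ℕ → ι → ℕ} (hα : TendstoInDirection θ α) :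
    Tendsto (fun k => G (α k) / size (α k)) atTop (𝓝 (limitRatio G θ)) := by
  have hc := tendstoInDirection_ceilSeq hθ
  obtain ⟨hu, hu'⟩ := isBoundedUnder_ratio hsub hpos hα.size_tendsto
  obtain ⟨hw, hw'⟩ := isBoundedUnder_ratio hsub hpos hc.size_tendsto
  have h₁ := limsup_ratio_le_liminf_ratio hsub hpos hθ.2 hα hc
  have h₂ := limsup_ratio_le_liminf_ratio hsub hpos hθ.2 hc hα
  have h₃ := liminf_le_limsup hu hu'
  have h₄ := liminf_le_limsup hw hw'
  exact tendsto_of_liminf_eq_limsup (by rw [limitRatio]; linarith)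
    (by rw [limitRatio]; linarith) hu hu'

theorem tendsto_div_natCast_limitRatio (hsub : ∀ a b, G (a + b) ≤ G a + G b)
    (hpos : ∀ a, 0 ≤ G a) {θ : ι → ℝ} (hθ : θ ∈ posSimplex ι) {s : ℝ} (hs : 0 < s)
    {α : ℕ → ι → ℕ} (h : ∀ i, Tendsto (fun k => (α k i : ℝ) / k) atTop (𝓝 (s * θ i))) :
    Tendsto (fun k => G (α k) / k) atTop (𝓝 (limitRatio G θ * s)) := by
  have hα := TendstoInDirection.of_tendsto_coord_div hθ.1 hs h
  have hsize : Tendsto (fun k => size (α k) / k) atTop (𝓝 s) := by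
    simpa [← Finset.mul_sum, hθ.1] using tendsto_size_div_of_tendsto_coord_div h
  refine ((tendsto_limitRatio hsub hpos hθ hα).mul hsize).congr' ?_
  filter_upwards [hα.size_tendsto.eventually_gt_atTop 0] with k hk
  exact div_mul_div_cancel₀ hk.ne'

theorem convexOn_limitRatio (hsub : ∀ a b, G (a + b) ≤ G a + G b) (hpos : ∀ a, 0 ≤ G a) :
    ConvexOn ℝ (posSimplex ι) (limitRatio G) := by
  refine ⟨convex_posSimplex, fun x hx y hy t u ht hu htu => ?_⟩
  rcases ht.eq_or_lt with rfl | ht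
  · simp [show u = 1 by linarith]
  rcases hu.eq_or_lt with rfl | hu
  · simp [show t = 1 by linarith]
  set a := ceilSeq (t • x)
  set b := ceilSeq (u • y)
  have ha i := tendsto_ceilSeq_div (v := t • x) (fun i => mul_nonneg ht.le (hx.2 i).le) i
  have hb i := tendsto_ceilSeq_div (v := u • y) (fun i => mul_nonneg hu.le (hy.2 i).le) i
  have hab : ∀ i, Tendsto (fun k => ((a k + b k) i : ℝ) / k) atTop (𝓝 (1 * (t • x + u • y) i)) :=
    fun i => by simpa [add_div] using (ha i).add (hb i)
  have := le_of_tendsto_of_tendsto'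
    (tendsto_div_natCast_limitRatio hsub hpos (convex_posSimplex hx hy ht.le hu.le htu) one_pos hab)
    ((tendsto_div_natCast_limitRatio hsub hpos hx ht ha).add
      (tendsto_div_natCast_limitRatio hsub hpos hy hu hb))
    fun k => by rw [← add_div]; gcongr; exact hsub _ _
  simpa [mul_comm] using this

end Zaharjuta

open Zaharjuta

/-- **Zaharjuta's theorem.** If `F : ℕ^{n+1} → ℝ` is subadditive and bounded below by a
linear function, then for any sequence `α(k)` with `|α(k)| → ∞` and
`α(k)/|α(k)| → θ ∈ Σ^0`, the limit of `F(α(k))/|α(k)|` exists, depends only on `θ`, and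
defines a convex function on `Σ^0`. -/
theorem zaharjuta (n : ℕ) (F : (Fin (n + 1) → ℕ) → ℝ)
    (hsub : ∀ α β : Fin (n + 1) → ℕ, F (α + β) ≤ F α + F β)
    (lam : EuclideanSpace ℝ (Fin (n + 1)) →ₗ[ℝ] ℝ)
    (hlow : ∀ α : Fin (n + 1) → ℕ, lam (toR n α) ≤ F α) :
    ∃ c : EuclideanSpace ℝ (Fin (n + 1)) → ℝ,
      ConvexOn ℝ (Sigma0 n) c ∧
      ∀ θ ∈ Sigma0 n, ∀ α : ℕ → (Fin (n + 1) → ℕ),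
        Tendsto (fun k => ∑ i, (α k i : ℝ)) atTop atTop →
        Tendsto (fun k => (∑ i, (α k i : ℝ))⁻¹ • toR n (α k)) atTop (nhds θ) →
        Tendsto (fun k => F (α k) / ∑ i, (α k i : ℝ)) atTop (nhds (c θ)) := by
  set G : (Fin (n + 1) → ℕ) → ℝ := fun γ => F γ - lam (toR n γ)
  have htoR_add (a b : Fin (n + 1) → ℕ) : toR n (a + b) = toR n a + toR n b := by
    ext; simp [toR]
  have hGsub (a b : Fin (n + 1) → ℕ) : G (a + b) ≤ G a + G b := by
    simp only [G, htoR_add, map_add]; linarith [hsub a b]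
  have hGpos (γ : Fin (n + 1) → ℕ) : 0 ≤ G γ := sub_nonneg.2 (hlow γ)
  refine ⟨fun θ => limitRatio G θ.ofLp + lam θ,
    ((convexOn_limitRatio hGsub hGpos).comp_linearMap
      (WithLp.linearEquiv 2 ℝ (Fin (n + 1) → ℝ)).toLinearMap).add
      (lam.convexOn (convex_posSimplex.linear_preimage _)), fun θ hθ α hsize hdir => ?_⟩
  have hα : TendstoInDirection θ.ofLp α :=
    ⟨hsize, tendsto_pi_nhds.1 <| (((PiLp.continuous_ofLp 2 _).tendsto θ).comp hdir).congr
      fun k => by ext i; simp [toR, size, div_eq_inv_mul]⟩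
  refine ((tendsto_limitRatio hGsub hGpos hθ hα).add
    ((lam.continuous_of_finiteDimensional.tendsto θ).comp hdir)).congr fun k => ?_
  simp only [G, Function.comp_apply, map_smul, smul_eq_mul, size]
  ring
end

section
/- Let O ⊆ ℝ^{n+1} be a nonempty open convex cone contained in the nonnegative orthant [0,∞)^{n+1}, let M > 0, and let F be a subadditive real-valued function on the set S := (O \ B(0,M)) ∩ ℕ^{n+1}, where B(0,M) is the Euclidean ball of radius M about the origin (note S is closed under addition). Then for every closed convex cone K ⊆ ℝ^{n+1} with K \ {0} ⊆ O there exists a constant C_K such that F(α) ≤ C_K·|α| for all α ∈ (K \ B(0,M)) ∩ ℕ^{n+1}. -/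
/-!
By compactness of `K ∩ sphere 0 1` there is `ε > 0` such that every point within `ε‖y‖` of a
nonzero `y ∈ K` lies in `O`. Let `α` be a lattice point of large norm within `√(n+1)` of some
`y ∈ K`. Split `y = v + u` inside `K` with `‖v‖ = s` fixed and round `α - u` up to a lattice
point `γ`. Then `γ` and `α - γ` both lie in `O` outside the ball, `‖γ‖ ≤ s + 2√(n+1)`, and
`α - γ` is again within `√(n+1)` of `u ∈ K`. So `F α ≤ F (α - γ) + F γ`, and as `F` is bounded
on the finitely many lattice points of bounded norm, induction on `|α|` gives `F α ≤ C |α|`.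
-/
open Set Metric

theorem le_mul_sum_of_forall_split {ι : Type*} [Fintype ι] {P : (ι → ℕ) → Prop}
    {F : (ι → ℕ) → ℝ} {C : ℝ} (hC : 0 ≤ C)
    (hP : ∀ α, P α → α ≠ 0 ∧
      (F α ≤ C ∨ ∃ α' γ, α = α' + γ ∧ γ ≠ 0 ∧ P α' ∧ F α ≤ F α' + C)) :
    ∀ α, P α → F α ≤ C * ∑ i, (α i : ℝ) := by
  have one_le_sum : ∀ β : ι → ℕ, β ≠ 0 → 1 ≤ ∑ i, β i := fun β hβ =>
    Nat.one_le_iff_ne_zero.2 fun h =>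
      hβ (funext fun i => Finset.sum_eq_zero_iff.1 h i (Finset.mem_univ i))
  have le_mul_sum : ∀ β : ι → ℕ, β ≠ 0 → C ≤ C * ∑ i, (β i : ℝ) := fun β hβ =>
    le_mul_of_one_le_right hC (by exact_mod_cast one_le_sum β hβ)
  intro α
  induction h : ∑ i, α i using Nat.strong_induction_on generalizing α with
  | _ m ih =>
  intro hα
  obtain ⟨hα0, hbase | ⟨α', γ, rfl, hγ, hα', hF⟩⟩ := hP α hα
  · exact hbase.trans (le_mul_sum α hα0)
  have hlt : ∑ i, α' i < m := by
    have := one_le_sum γ hγ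
    simp only [Pi.add_apply, Finset.sum_add_distrib] at h
    omega
  calc F (α' + γ) ≤ F α' + C := hF
    _ ≤ C * ∑ i, (α' i : ℝ) + C * ∑ i, (γ i : ℝ) :=
      add_le_add (ih _ hlt α' rfl hα') (le_mul_sum γ hγ)
    _ = C * ∑ i, ((α' + γ) i : ℝ) := by
      simp only [Pi.add_apply, Nat.cast_add, Finset.sum_add_distrib, mul_add]

@[simp]
theorem toR_apply (n : ℕ) (α : Fin (n + 1) → ℕ) (i : Fin (n + 1)) : toR n α i = α i := rfl

@[simp]
theorem toR_zero (n : ℕ) : toR n 0 = 0 := by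
  ext i; simp

theorem toR_sub {n : ℕ} {α β : Fin (n + 1) → ℕ} (h : β ≤ α) :
    toR n (α - β) = toR n α - toR n β := by
  ext i; simp [Nat.cast_sub (h i)]

theorem exists_nonneg_bound_of_norm_toR_le (n : ℕ) (F : (Fin (n + 1) → ℕ) → ℝ) (B : ℝ) :
    ∃ C, 0 ≤ C ∧ ∀ β, ‖toR n β‖ ≤ B → F β ≤ C := by
  have hfin : {β | ‖toR n β‖ ≤ B}.Finite := by
    refine (Set.finite_Iic fun _ => ⌈B⌉₊).subset fun β hβ i => ?_
    have hβi : (β i : ℝ) ≤ B := by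
      simpa using (PiLp.norm_apply_le (toR n β) i).trans hβ
    exact Nat.cast_le.1 (hβi.trans (Nat.le_ceil B))
  obtain ⟨C, hC⟩ := (hfin.image F).bddAbove
  exact ⟨max C 0, le_max_right _ _, fun β hβ => (hC ⟨β, hβ, rfl⟩).trans (le_max_left _ _)⟩

theorem dist_toR_ceil_le {n : ℕ} (t : EuclideanSpace ℝ (Fin (n + 1))) (ht : ∀ i, 0 ≤ t i) :
    dist (toR n fun i => ⌈t i⌉₊) t ≤ √(n + 1) := by
  rw [EuclideanSpace.dist_eq]
  gcongr
  calc ∑ i, dist ((toR n fun i => ⌈t i⌉₊) i) (t i) ^ 2 ≤ ∑ _i : Fin (n + 1), (1 : ℝ) := by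
        gcongr with i
        rw [toR_apply, Real.dist_eq, abs_of_nonneg (by linarith [Nat.le_ceil (t i)])]
        nlinarith [Nat.le_ceil (t i), Nat.ceil_lt_add_one (ht i)]
    _ = n + 1 := by simp

theorem exists_add_eq_of_le_norm {E : Type*} [NormedAddCommGroup E] [NormedSpace ℝ E]
    {K : Set E} (hK : ∀ c : ℝ, 0 ≤ c → ∀ x ∈ K, c • x ∈ K) {y : E} (hy : y ∈ K)
    {s : ℝ} (hs : 0 ≤ s) (hsy : s ≤ ‖y‖) :
    ∃ v ∈ K, ∃ u ∈ K, y = v + u ∧ ‖v‖ = s ∧ ‖u‖ = ‖y‖ - s := by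
  rcases eq_or_ne y 0 with rfl | hy0
  · have : s = 0 := le_antisymm (by simpa using hsy) hs
    exact ⟨0, hy, 0, hy, by simp, by simp [this], by simp [this]⟩
  have hy' : 0 < ‖y‖ := norm_pos_iff.2 hy0
  have hr : 0 ≤ s / ‖y‖ := div_nonneg hs hy'.le
  have hr1 : s / ‖y‖ ≤ 1 := (div_le_one hy').2 hsy
  refine ⟨(s / ‖y‖) • y, hK _ hr y hy, (1 - s / ‖y‖) • y, hK _ (sub_nonneg.2 hr1) y hy,
    by rw [← add_smul, add_sub_cancel, one_smul], ?_, ?_⟩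
  · rw [norm_smul, Real.norm_of_nonneg hr, div_mul_cancel₀ _ hy'.ne']
  · rw [norm_smul, Real.norm_of_nonneg (sub_nonneg.2 hr1), sub_mul, one_mul,
      div_mul_cancel₀ _ hy'.ne']

theorem exists_closedBall_subset_of_cone {E : Type*} [NormedAddCommGroup E] [NormedSpace ℝ E]
    [ProperSpace E] {O K : Set E} (hO : IsOpen O) (hOcone : ∀ c : ℝ, 0 < c → ∀ x ∈ O, c • x ∈ O)
    (hK : IsClosed K) (hKcone : ∀ c : ℝ, 0 ≤ c → ∀ x ∈ K, c • x ∈ K) (hKO : K \ {0} ⊆ O) :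
    ∃ ε > 0, ∀ y ∈ K, y ≠ 0 → closedBall y (ε * ‖y‖) ⊆ O := by
  have hsphere : K ∩ sphere 0 1 ⊆ O := fun x hx =>
    hKO ⟨hx.1, ne_zero_of_mem_unit_sphere ⟨x, hx.2⟩⟩
  obtain ⟨δ, hδ, hδO⟩ :=
    ((isCompact_sphere 0 1).inter_left hK).exists_thickening_subset_open hO hsphere
  refine ⟨δ / 2, half_pos hδ, fun y hy hy0 z hz => ?_⟩
  have hy' : 0 < ‖y‖ := norm_pos_iff.2 hy0
  have hyK : ‖y‖⁻¹ • y ∈ K ∩ sphere 0 1 :=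
    ⟨hKcone _ (inv_nonneg.2 hy'.le) y hy, by simp [norm_smul, hy'.ne']⟩
  have hzO : ‖y‖⁻¹ • z ∈ O := by
    refine hδO (mem_thickening_iff.2 ⟨_, hyK, ?_⟩)
    rw [dist_smul₀, norm_inv, norm_norm, inv_mul_lt_iff₀ hy']
    have := mem_closedBall.1 hz
    nlinarith
  simpa [smul_inv_smul₀ hy'.ne'] using hOcone _ hy' _ hzO

section LatticeStep

variable {n : ℕ} {O K : Set (EuclideanSpace ℝ (Fin (n + 1)))} {ε : ℝ}

theorem exists_lattice_step (hO_orth : O ⊆ {x | ∀ i, 0 ≤ x i})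
    (hKcone : ∀ c : ℝ, 0 ≤ c → ∀ x ∈ K, c • x ∈ K)
    (hε : ∀ y ∈ K, y ≠ 0 → closedBall y (ε * ‖y‖) ⊆ O)
    {s : ℝ} (hs : 0 < s) (hεs : 2 * √(n + 1) ≤ ε * s)
    {α : Fin (n + 1) → ℕ} {y : EuclideanSpace ℝ (Fin (n + 1))} (hy : y ∈ K)
    (hαy : dist (toR n α) y ≤ √(n + 1)) (hsy : s < ‖y‖) (hεy : √(n + 1) ≤ ε * (‖y‖ - s)) :
    ∃ γ ≤ α, toR n γ ∈ O ∧ |‖toR n γ‖ - s| ≤ 2 * √(n + 1) ∧ toR n (α - γ) ∈ O ∧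
      ∃ u ∈ K, ‖u‖ = ‖y‖ - s ∧ dist (toR n (α - γ)) u ≤ √(n + 1) := by
  obtain ⟨v, hv, u, hu, rfl, hvs, hus⟩ := exists_add_eq_of_le_norm hKcone hy hs.le hsy.le
  have hv0 : v ≠ 0 := norm_pos_iff.1 (hvs ▸ hs)
  have hu0 : u ≠ 0 := norm_pos_iff.1 (by linarith)
  set t := toR n α - u
  have htv : dist t v ≤ √(n + 1) := by
    rwa [dist_eq_norm, sub_sub, add_comm u, ← dist_eq_norm]
  have htO : t ∈ O :=
    hε v hv hv0 (mem_closedBall.2 (by rw [hvs]; linarith [Real.sqrt_nonneg (n + 1)]))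
  set γ : Fin (n + 1) → ℕ := fun i => ⌈t i⌉₊
  have hγt : dist (toR n γ) t ≤ √(n + 1) := dist_toR_ceil_le t (hO_orth htO)
  have hγv : dist (toR n γ) v ≤ 2 * √(n + 1) := by linarith [dist_triangle (toR n γ) t v]
  have hγO : toR n γ ∈ O := hε v hv hv0 (mem_closedBall.2 (hγv.trans (hvs ▸ hεs)))
  have hrest : dist (toR n α - toR n γ) u ≤ √(n + 1) := by
    rwa [dist_eq_norm, sub_right_comm, ← dist_eq_norm, dist_comm]
  have hrestO : toR n α - toR n γ ∈ O :=
    hε u hu hu0 (mem_closedBall.2 (hrest.trans (hus ▸ hεy)))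
  have hγα : γ ≤ α := fun i => by
    simpa using hO_orth hrestO i
  refine ⟨γ, hγα, hγO, ?_, by rwa [toR_sub hγα], u, hu, hus, by rwa [toR_sub hγα]⟩
  rw [← hvs]
  exact (abs_norm_sub_norm_le _ _).trans (by rwa [← dist_eq_norm])

theorem exists_lattice_split_of_norm_gt {M : ℝ} (hO_orth : O ⊆ {x | ∀ i, 0 ≤ x i})
    (hKcone : ∀ c : ℝ, 0 ≤ c → ∀ x ∈ K, c • x ∈ K)
    (hε0 : 0 < ε) (hε : ∀ y ∈ K, y ≠ 0 → closedBall y (ε * ‖y‖) ⊆ O) (hM : 0 < M) :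
    ∃ R, ∀ α y, y ∈ K → dist (toR n α) y ≤ √(n + 1) → R < ‖toR n α‖ →
      ∃ γ ≤ α, (toR n γ ∈ O \ ball 0 M ∧ ‖toR n γ‖ ≤ R) ∧ toR n (α - γ) ∈ O \ ball 0 M ∧
        ∃ u ∈ K, dist (toR n (α - γ)) u ≤ √(n + 1) := by
  set σ := √(n + 1 : ℝ)
  have hσ : 0 ≤ σ := Real.sqrt_nonneg _
  have hσε : ε * (σ / ε) = σ := mul_div_cancel₀ _ hε0.ne'
  have hσε0 : 0 ≤ σ / ε := div_nonneg hσ hε0.le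
  set s := 2 * (σ / ε) + M + 2 * σ
  refine ⟨s + 2 * σ + σ / ε + M, fun α y hy hαy hαR => ?_⟩
  have hyα : ‖toR n α‖ - σ ≤ ‖y‖ := by
    linarith [norm_sub_norm_le (toR n α) y, dist_eq_norm (toR n α) y]
  have hsy : σ / ε + σ + M < ‖y‖ - s := by linarith
  obtain ⟨γ, hγα, hγO, hγs, hα'O, u, hu, hus, hα'u⟩ :=
    exists_lattice_step hO_orth hKcone hε (s := s) (by positivity) (by nlinarith) hy hαy
      (by linarith) (by nlinarith)
  have hγ : |‖toR n γ‖ - s| ≤ 2 * σ := hγs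
  rw [abs_le] at hγ
  have hα' : ‖u‖ - σ ≤ ‖toR n (α - γ)‖ := by
    linarith [norm_sub_norm_le u (toR n (α - γ)), dist_eq_norm' (toR n (α - γ)) u]
  refine ⟨γ, hγα, ⟨⟨hγO, ?_⟩, by linarith⟩, ⟨hα'O, ?_⟩, u, hu, hα'u⟩ <;>
    rw [mem_ball_zero_iff, not_lt] <;> linarith

end LatticeStep

theorem linear_upper_bound_on_closed_subcone_general (n : ℕ) (O : Set (EuclideanSpace ℝ (Fin (n + 1))))
    (hO_open : IsOpen O)
    (hO_orth : O ⊆ {x | ∀ i, 0 ≤ x i})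
    (hO_cone : ∀ c : ℝ, 0 < c → ∀ x ∈ O, c • x ∈ O)
    (M : ℝ) (hM : 0 < M)
    (F : (Fin (n + 1) → ℕ) → ℝ)
    (hsub : ∀ α β : Fin (n + 1) → ℕ, toR n α ∈ O \ ball 0 M → toR n β ∈ O \ ball 0 M →
      F (α + β) ≤ F α + F β) :
    ∀ K : Set (EuclideanSpace ℝ (Fin (n + 1))),
      IsClosed K → Convex ℝ K → (∀ c : ℝ, 0 ≤ c → ∀ x ∈ K, c • x ∈ K) →
      K \ {0} ⊆ O →
      ∃ C : ℝ, ∀ α : Fin (n + 1) → ℕ, toR n α ∈ K \ ball 0 M →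
        F α ≤ C * ∑ i, (α i : ℝ) := by
  intro K hK _ hKcone hKO
  obtain ⟨ε, hε0, hε⟩ := exists_closedBall_subset_of_cone hO_open hO_cone hK hKcone hKO
  obtain ⟨R, hR⟩ := exists_lattice_split_of_norm_gt hO_orth hKcone hε0 hε hM
  obtain ⟨C, hC0, hC⟩ := exists_nonneg_bound_of_norm_toR_le n F R
  have ne_zero : ∀ β, toR n β ∉ ball 0 M → β ≠ 0 := by
    rintro β hβ rfl
    exact hβ (by simpa using hM)
  refine ⟨C, fun α hα => le_mul_sum_of_forall_split hC0
    (P := fun α => (∃ y ∈ K, dist (toR n α) y ≤ √(n + 1)) ∧ toR n α ∉ ball 0 M) ?_ α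
    ⟨⟨_, hα.1, by simp⟩, hα.2⟩⟩
  rintro α ⟨⟨y, hy, hαy⟩, hαM⟩
  refine ⟨ne_zero α hαM, ?_⟩
  rcases le_or_gt ‖toR n α‖ R with hαR | hαR
  · exact .inl (hC α hαR)
  obtain ⟨γ, hγα, ⟨hγ, hγR⟩, hα', hα'K⟩ := hR α y hy hαy hαR
  have hsplit : α = (α - γ) + γ := (tsub_add_cancel_of_le hγα).symm
  refine .inr ⟨α - γ, γ, hsplit, ne_zero γ hγ.2, ⟨hα'K, hα'.2⟩, ?_⟩
  calc F α = F ((α - γ) + γ) := congrArg F hsplit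
    _ ≤ F (α - γ) + F γ := hsub _ _ hα' hγ
    _ ≤ F (α - γ) + C := by gcongr; exact hC γ hγR

/-- If `F` is subadditive on `S := (O \ B(0,M)) ∩ ℕ^{n+1}` where `O` is a nonempty open
convex cone inside the nonnegative orthant, then for every closed convex cone `K` with
`K \ {0} ⊆ O` there is `C_K` with `F(α) ≤ C_K·|α|` on `(K \ B(0,M)) ∩ ℕ^{n+1}`. -/
theorem linear_upper_bound_on_closed_subcone (n : ℕ) (O : Set (EuclideanSpace ℝ (Fin (n + 1))))
    (hO_open : IsOpen O) (hO_conv : Convex ℝ O) (hO_ne : O.Nonempty)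
    (hO_orth : O ⊆ {x | ∀ i, 0 ≤ x i})
    (hO_cone : ∀ c : ℝ, 0 < c → ∀ x ∈ O, c • x ∈ O)
    (M : ℝ) (hM : 0 < M)
    (F : (Fin (n + 1) → ℕ) → ℝ)
    (hsub : ∀ α β : Fin (n + 1) → ℕ, toR n α ∈ O \ ball 0 M → toR n β ∈ O \ ball 0 M →
      F (α + β) ≤ F α + F β) :
    ∀ K : Set (EuclideanSpace ℝ (Fin (n + 1))),
      IsClosed K → Convex ℝ K → (∀ c : ℝ, 0 ≤ c → ∀ x ∈ K, c • x ∈ K) →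
      K \ {0} ⊆ O →
      ∃ C : ℝ, ∀ α : Fin (n + 1) → ℕ, toR n α ∈ K \ ball 0 M →
        F α ≤ C * ∑ i, (α i : ℝ) :=
  linear_upper_bound_on_closed_subcone_general n O hO_open hO_orth hO_cone M hM F hsub
end

section
/- Let Γ ⊆ ℕ^{n+1} be a subsemigroup which generates ℤ^{n+1} as a group, and let F : Γ → ℝ be subadditive and locally linearly bounded from below. Let c[F] : Σ(Γ)° ∩ Σ^0 → ℝ be the function given by the limits c[F](p) = lim F(α(k))/|α(k)| over sequences α(k) ∈ Γ with |α(k)| → ∞ and α(k)/|α(k)| → p, extended one-homogeneously to Σ(Γ)° by c[F](x) := |x|·c[F](x/|x|). Then c[F] equals on Σ(Γ)° the convex envelope P(F), i.e. for every x ∈ Σ(Γ)°, c[F](x) = sup{λ(x) : λ : ℝ^{n+1} → ℝ linear and λ(α) ≤ F(α) for all α ∈ Γ ∩ Σ(Γ)°}. -/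
open Set Filter

/-- The sum of the coordinates of a vector, denoted `|·|` in the paper. -/
noncomputable def coordSum (n : ℕ) (x : EuclideanSpace ℝ (Fin (n + 1))) : ℝ :=
  ∑ i, x i

/-- The convex envelope `P(F)(x)`: the supremum of `λ(x)` over all linear functions `λ`
dominated by `F` on `Γ ∩ Σ(Γ)°`. -/
noncomputable def convexEnvelope (n : ℕ) (Γ : Set (Fin (n + 1) → ℕ))
    (F : (Fin (n + 1) → ℕ) → ℝ) (x : EuclideanSpace ℝ (Fin (n + 1))) : ℝ :=
  sSup {y : ℝ | ∃ lam : EuclideanSpace ℝ (Fin (n + 1)) →ₗ[ℝ] ℝ,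
    (∀ α ∈ Γ, toR n α ∈ interior (closedConvexCone n (toR n '' Γ)) → lam (toR n α) ≤ F α) ∧
    y = lam x}


open Topology
open scoped Pointwise

/-!
Points of `Σ(Γ)` are limits of `α / k` with `α ∈ Γ` and `k → ∞`: these limits form a closed convex
cone containing `Γ`. Along such sequences `F(α)/k → c[F](x)`, so `c[F]` inherits subadditivity from
`F` through `α/k + β/l = (lα + kβ)/(kl)`, while `F(kα) ≤ k F(α)` gives `c[F] ≤ F` on `Γ ∩ Σ(Γ)°` and
every linear `λ ≤ F` on `Γ ∩ Σ(Γ)°` satisfies `λ ≤ c[F]`. Being sublinear on the open cone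
`Σ(Γ)°`, `c[F]` has at each point `x` a linear minorant touching it at `x` (Hahn–Banach, dominated
by the directional derivative of `c[F]` at `x`); this minorant is admissible for `P(F)`.
-/

theorem AddSubsemigroup.nsmul_mem {M : Type*} [AddMonoid M] (Γ : AddSubsemigroup M) {α : M}
    (hα : α ∈ Γ) : ∀ {m : ℕ}, m ≠ 0 → m • α ∈ Γ
  | 1, _ => by rwa [one_nsmul]
  | m + 2, _ => by
    rw [succ_nsmul]
    exact Γ.add_mem (Γ.nsmul_mem hα m.succ_ne_zero) hα

theorem AddSubsemigroup.map_nsmul_le {M : Type*} [AddMonoid M] {Γ : AddSubsemigroup M}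
    {F : M → ℝ} (hF : ∀ α ∈ Γ, ∀ β ∈ Γ, F (α + β) ≤ F α + F β) {α : M} (hα : α ∈ Γ) :
    ∀ {m : ℕ}, m ≠ 0 → F (m • α) ≤ m * F α
  | 1, _ => by simp
  | m + 2, _ => by
    have ih := map_nsmul_le hF hα m.succ_ne_zero
    rw [succ_nsmul]
    push_cast at ih ⊢
    linarith [hF _ (Γ.nsmul_mem hα m.succ_ne_zero) _ hα]

lemma exists_pos_add_smul_mem {E : Type*} [AddCommGroup E] [Module ℝ E] [TopologicalSpace E]
    [ContinuousAdd E] [ContinuousSMul ℝ E] {U : Set E} {x : E} (hU : U ∈ 𝓝 x) (v : E) :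
    ∃ t : ℝ, 0 < t ∧ x + t • v ∈ U := by
  have hcont : Continuous fun t : ℝ => x + t • v := by fun_prop
  have h : ∀ᶠ t in 𝓝[>] (0 : ℝ), x + t • v ∈ U :=
    nhdsWithin_le_nhds (hcont.tendsto' 0 x (by simp) hU)
  obtain ⟨t, htU, ht⟩ := (h.and self_mem_nhdsWithin).exists
  exact ⟨t, ht, htU⟩

lemma ConvexCone.exists_smul_add_mem_of_isOpen {E : Type*} [AddCommGroup E] [Module ℝ E]
    [TopologicalSpace E] [ContinuousAdd E] [ContinuousSMul ℝ E] {K : ConvexCone ℝ E}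
    (hK : IsOpen (K : Set E)) {x : E} (hx : x ∈ K) (v : E) : ∃ s : ℝ, 0 < s ∧ s • x + v ∈ K := by
  obtain ⟨t, ht, htK⟩ := exists_pos_add_smul_mem (hK.mem_nhds hx) v
  refine ⟨t⁻¹, inv_pos.2 ht, ?_⟩
  simpa [smul_add, inv_smul_smul₀ ht.ne'] using K.smul_mem (inv_pos.2 ht) htK

namespace ConvexCone

variable {E : Type*} [AddCommGroup E] [Module ℝ E]

structure SublinearOn (K : ConvexCone ℝ E) (f : E → ℝ) : Prop where
  map_add_le : ∀ a ∈ K, ∀ b ∈ K, f (a + b) ≤ f a + f b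
  map_smul : ∀ r : ℝ, 0 < r → ∀ a ∈ K, f (r • a) = r * f a

variable {K : ConvexCone ℝ E} {f : E → ℝ} {x : E}

def slopes (K : ConvexCone ℝ E) (f : E → ℝ) (x v : E) : Set ℝ :=
  (fun s : ℝ => f (s • x + v) - s * f x) '' {s | 0 ≤ s ∧ s • x + v ∈ K}

/-- By homogeneity `f (s • x + v) - s * f x = (f (x + t • v) - f x) / t` with `t = s⁻¹`, so this
is the one-sided directional derivative of `f` at `x`; the term `s = 0` bounds it by `f v`. -/
noncomputable def dirDeriv (K : ConvexCone ℝ E) (f : E → ℝ) (x v : E) : ℝ :=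
  sInf (slopes K f x v)

lemma mem_of_forall_smul_add_mem (hx : ∀ v, ∃ s : ℝ, 0 < s ∧ s • x + v ∈ K) : x ∈ K := by
  obtain ⟨s, hs, hsx⟩ := hx 0
  simpa [inv_smul_smul₀ hs.ne'] using K.smul_mem (inv_pos.2 hs) hsx

lemma bddBelow_slopes (hf : SublinearOn K f) (hx : ∀ v, ∃ s : ℝ, 0 < s ∧ s • x + v ∈ K)
    (v : E) : BddBelow (slopes K f x v) := by
  obtain ⟨t, ht, htv⟩ := hx (-v)
  refine ⟨t * f x - f (t • x + -v), ?_⟩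
  rintro _ ⟨s, ⟨hs, hsv⟩, rfl⟩
  have h := hf.map_add_le _ hsv _ htv
  rw [show s • x + v + (t • x + -v) = (s + t) • x by module,
    hf.map_smul _ (by linarith) _ (mem_of_forall_smul_add_mem hx)] at h
  linarith

lemma dirDeriv_le (hf : SublinearOn K f) (hx : ∀ v, ∃ s : ℝ, 0 < s ∧ s • x + v ∈ K)
    {v : E} {s : ℝ} (hs : 0 ≤ s) (hsv : s • x + v ∈ K) :
    dirDeriv K f x v ≤ f (s • x + v) - s * f x :=
  csInf_le (bddBelow_slopes hf hx v) ⟨s, ⟨hs, hsv⟩, rfl⟩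

lemma le_dirDeriv (hx : ∀ v, ∃ s : ℝ, 0 < s ∧ s • x + v ∈ K) {v : E} {b : ℝ}
    (h : ∀ s : ℝ, 0 ≤ s → s • x + v ∈ K → b ≤ f (s • x + v) - s * f x) :
    b ≤ dirDeriv K f x v := by
  obtain ⟨s, hs, hsv⟩ := hx v
  exact le_csInf ⟨_, s, ⟨hs.le, hsv⟩, rfl⟩ (by rintro _ ⟨s, ⟨hs, hsv⟩, rfl⟩; exact h s hs hsv)

lemma dirDeriv_smul_le (hf : SublinearOn K f) (hx : ∀ v, ∃ s : ℝ, 0 < s ∧ s • x + v ∈ K)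
    {r : ℝ} (hr : 0 < r) (v : E) : dirDeriv K f x (r • v) ≤ r * dirDeriv K f x v := by
  rw [← div_le_iff₀' hr]
  refine le_dirDeriv hx fun s hs hsv => ?_
  have hrsv : (r * s) • x + r • v = r • (s • x + v) := by module
  have h := dirDeriv_le hf hx (mul_nonneg hr.le hs) (hrsv ▸ K.smul_mem hr hsv)
  rw [hrsv, hf.map_smul r hr _ hsv] at h
  rw [div_le_iff₀' hr]
  linarith

lemma dirDeriv_smul (hf : SublinearOn K f) (hx : ∀ v, ∃ s : ℝ, 0 < s ∧ s • x + v ∈ K)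
    {r : ℝ} (hr : 0 < r) (v : E) : dirDeriv K f x (r • v) = r * dirDeriv K f x v := by
  refine (dirDeriv_smul_le hf hx hr v).antisymm ?_
  have h := dirDeriv_smul_le hf hx (inv_pos.2 hr) (r • v)
  rwa [inv_smul_smul₀ hr.ne', le_inv_mul_iff₀ hr] at h

lemma dirDeriv_add_le (hf : SublinearOn K f) (hx : ∀ v, ∃ s : ℝ, 0 < s ∧ s • x + v ∈ K)
    (v w : E) : dirDeriv K f x (v + w) ≤ dirDeriv K f x v + dirDeriv K f x w := by
  rw [← sub_le_iff_le_add]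
  refine le_dirDeriv hx fun s hs hsv => ?_
  rw [sub_le_comm]
  refine le_dirDeriv hx fun t ht htw => ?_
  have hsum : (s + t) • x + (v + w) = (s • x + v) + (t • x + w) := by module
  have h := dirDeriv_le hf hx (add_nonneg hs ht) (hsum ▸ K.add_mem hsv htw)
  rw [hsum] at h
  linarith [hf.map_add_le _ hsv _ htw]

theorem SublinearOn.exists_linearMap_eq_le (hf : SublinearOn K f)
    (hx : ∀ v, ∃ s : ℝ, 0 < s ∧ s • x + v ∈ K) :
    ∃ g : E →ₗ[ℝ] ℝ, g x = f x ∧ ∀ y ∈ K, g y ≤ f y := by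
  have hzero : dirDeriv K f x 0 = 0 := by
    have h := dirDeriv_smul hf hx two_pos 0
    rw [smul_zero] at h
    linarith
  obtain ⟨g, -, hg⟩ := exists_extension_of_le_sublinear ⟨⊥, 0⟩ (dirDeriv K f x)
    (fun _ hr => dirDeriv_smul hf hx hr) (dirDeriv_add_le hf hx)
    (by rintro ⟨v, hv⟩; simp [(Submodule.mem_bot ℝ).1 hv, hzero])
  have hle : ∀ y ∈ K, g y ≤ f y := fun y hy =>
    (hg y).trans (by simpa using dirDeriv_le hf hx le_rfl (by simpa using hy))
  have hneg : g (-x) ≤ -f x := (hg _).trans (by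
    have h := dirDeriv_le hf hx zero_le_two
      (by simpa [two_smul] using mem_of_forall_smul_add_mem hx : (2 : ℝ) • x + -x ∈ K)
    rw [show (2 : ℝ) • x + -x = x by module] at h
    linarith)
  refine ⟨g, le_antisymm (hle x (mem_of_forall_smul_add_mem hx)) ?_, hle⟩
  rw [map_neg] at hneg
  linarith

end ConvexCone

namespace ChebyshevTransform

variable {n : ℕ}

lemma toR_add (α β : Fin (n + 1) → ℕ) : toR n (α + β) = toR n α + toR n β := by
  ext i; simp [toR]

lemma toR_nsmul (m : ℕ) (α : Fin (n + 1) → ℕ) : toR n (m • α) = (m : ℝ) • toR n α := by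
  ext i; simp [toR]

lemma coordSum_smul (r : ℝ) (x : EuclideanSpace ℝ (Fin (n + 1))) :
    coordSum n (r • x) = r * coordSum n x := by
  simp [coordSum, Finset.mul_sum]

lemma continuous_coordSum : Continuous (coordSum n) := by
  unfold coordSum; fun_prop

lemma closedConvexCone_subset {S T : Set (EuclideanSpace ℝ (Fin (n + 1)))} (hST : S ⊆ T)
    (hT : IsClosed T) (hT_conv : Convex ℝ T) (hT_smul : ∀ c : ℝ, 0 ≤ c → ∀ x ∈ T, c • x ∈ T) :
    closedConvexCone n S ⊆ T :=
  sInter_subset_of_mem ⟨hST, hT, hT_conv, hT_smul⟩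

lemma convex_closedConvexCone (S : Set (EuclideanSpace ℝ (Fin (n + 1)))) :
    Convex ℝ (closedConvexCone n S) :=
  convex_sInter fun _ hC => hC.2.2.1

lemma smul_mem_closedConvexCone {S : Set (EuclideanSpace ℝ (Fin (n + 1)))} {c : ℝ} (hc : 0 ≤ c)
    {x : EuclideanSpace ℝ (Fin (n + 1))} (hx : x ∈ closedConvexCone n S) :
    c • x ∈ closedConvexCone n S :=
  fun C hC => hC.2.2.2 c hc x (hx C hC)

lemma smul_mem_interior_closedConvexCone {S : Set (EuclideanSpace ℝ (Fin (n + 1)))} {c : ℝ}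
    (hc : 0 < c) {x : EuclideanSpace ℝ (Fin (n + 1))} (hx : x ∈ interior (closedConvexCone n S)) :
    c • x ∈ interior (closedConvexCone n S) := by
  have h : c • x ∈ interior (c • closedConvexCone n S) := by
    rw [interior_smul₀ hc.ne']
    exact smul_mem_smul_set hx
  refine interior_mono ?_ h
  rintro _ ⟨y, hy, rfl⟩
  exact smul_mem_closedConvexCone hc.le hy

def interiorCone (Γ : Set (Fin (n + 1) → ℕ)) : ConvexCone ℝ (EuclideanSpace ℝ (Fin (n + 1))) where
  carrier := interior (closedConvexCone n (toR n '' Γ))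
  smul_mem' _ hc _ hx := smul_mem_interior_closedConvexCone hc hx
  add_mem' x hx y hy := by
    have h := smul_mem_interior_closedConvexCone two_pos <|
      (convex_closedConvexCone _).interior hx hy (by norm_num : (0 : ℝ) ≤ 2⁻¹)
        (by norm_num : (0 : ℝ) ≤ 2⁻¹) (by norm_num)
    rwa [show (2 : ℝ) • ((2 : ℝ)⁻¹ • x + (2 : ℝ)⁻¹ • y) = x + y by module] at h

lemma isOpen_interiorCone (Γ : Set (Fin (n + 1) → ℕ)) :
    IsOpen (interiorCone (n := n) Γ : Set (EuclideanSpace ℝ (Fin (n + 1)))) :=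
  isOpen_interior

lemma closedConvexCone_subset_nonneg (Γ : Set (Fin (n + 1) → ℕ)) :
    closedConvexCone n (toR n '' Γ) ⊆ {x | ∀ i, 0 ≤ x i} := by
  refine closedConvexCone_subset ?_ ?_ ?_ ?_
  · rintro _ ⟨α, -, rfl⟩ i
    simp [toR]
  · rw [ofPred_forall]
    exact isClosed_iInter fun i => isClosed_le continuous_const (by fun_prop)
  · intro x hx y hy a b ha hb _ i
    simpa using add_nonneg (mul_nonneg ha (hx i)) (mul_nonneg hb (hy i))
  · intro c hc x hx i
    simpa using mul_nonneg hc (hx i)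

lemma pos_of_mem_interiorCone {Γ : Set (Fin (n + 1) → ℕ)} {x : EuclideanSpace ℝ (Fin (n + 1))}
    (hx : x ∈ interiorCone Γ) (i : Fin (n + 1)) : 0 < x i := by
  obtain ⟨t, ht, htx⟩ :=
    exists_pos_add_smul_mem (mem_interior_iff_mem_nhds.1 hx) (-EuclideanSpace.single i 1)
  have h := closedConvexCone_subset_nonneg Γ htx i
  simp at h
  linarith

lemma coordSum_pos {Γ : Set (Fin (n + 1) → ℕ)} {x : EuclideanSpace ℝ (Fin (n + 1))}
    (hx : x ∈ interiorCone Γ) : 0 < coordSum n x :=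
  Finset.sum_pos (fun i _ => pos_of_mem_interiorCone hx i) Finset.univ_nonempty

variable {Γ : AddSubsemigroup (Fin (n + 1) → ℕ)}

lemma inv_mul_smul_toR_add (α β : Fin (n + 1) → ℕ) {k l : ℕ} (hk : k ≠ 0) (hl : l ≠ 0) :
    ((k * l : ℕ) : ℝ)⁻¹ • toR n (l • α + k • β) = (k : ℝ)⁻¹ • toR n α + (l : ℝ)⁻¹ • toR n β := by
  rw [toR_add, toR_nsmul, toR_nsmul]
  match_scalars <;> field_simp

def scaledPoints (Γ : AddSubsemigroup (Fin (n + 1) → ℕ)) (M : ℕ) :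
    Set (EuclideanSpace ℝ (Fin (n + 1))) :=
  {x | ∃ α ∈ Γ, ∃ k : ℕ, M < k ∧ (k : ℝ)⁻¹ • toR n α = x}

/-- Closed by construction; as it is also a convex cone containing `Γ`, it contains `Σ(Γ)`. -/
def asymptoticCone (Γ : AddSubsemigroup (Fin (n + 1) → ℕ)) : Set (EuclideanSpace ℝ (Fin (n + 1))) :=
  ⋂ M, closure (scaledPoints Γ M)

lemma toR_mem_asymptoticCone {α : Fin (n + 1) → ℕ} (hα : α ∈ Γ) :
    toR n α ∈ asymptoticCone Γ :=
  mem_iInter.2 fun M => subset_closure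
    ⟨(M + 1) • α, Γ.nsmul_mem hα M.succ_ne_zero, M + 1, M.lt_succ_self, by
      rw [toR_nsmul, inv_smul_smul₀ (by positivity)]⟩

lemma add_mem_scaledPoints {M : ℕ} {x y : EuclideanSpace ℝ (Fin (n + 1))}
    (hx : x ∈ scaledPoints Γ M) (hy : y ∈ scaledPoints Γ M) : x + y ∈ scaledPoints Γ M := by
  obtain ⟨α, hα, k, hk, rfl⟩ := hx
  obtain ⟨β, hβ, l, hl, rfl⟩ := hy
  refine ⟨l • α + k • β, Γ.add_mem (Γ.nsmul_mem hα (by omega)) (Γ.nsmul_mem hβ (by omega)),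
    k * l, by nlinarith, ?_⟩
  exact inv_mul_smul_toR_add α β (by omega) (by omega)

lemma natCast_div_smul_mem_scaledPoints {M p q : ℕ} (hp : p ≠ 0) (hq : q ≠ 0)
    {x : EuclideanSpace ℝ (Fin (n + 1))} (hx : x ∈ scaledPoints Γ M) :
    ((p : ℝ) / q) • x ∈ scaledPoints Γ M := by
  obtain ⟨α, hα, k, hk, rfl⟩ := hx
  refine ⟨p • α, Γ.nsmul_mem hα hp, q * k, by nlinarith [Nat.pos_of_ne_zero hq], ?_⟩
  rw [toR_nsmul, smul_smul, smul_smul]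
  congr 1
  push_cast
  field_simp

lemma isClosed_asymptoticCone : IsClosed (asymptoticCone Γ) :=
  isClosed_iInter fun _ => isClosed_closure

lemma add_mem_asymptoticCone {x y : EuclideanSpace ℝ (Fin (n + 1))} (hx : x ∈ asymptoticCone Γ)
    (hy : y ∈ asymptoticCone Γ) : x + y ∈ asymptoticCone Γ :=
  mem_iInter.2 fun M => map_mem_closure₂ continuous_add (mem_iInter.1 hx M) (mem_iInter.1 hy M)
    fun _ ha _ hb => add_mem_scaledPoints ha hb

lemma smul_mem_asymptoticCone {r : ℝ} (hr : 0 ≤ r) {x : EuclideanSpace ℝ (Fin (n + 1))}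
    (hx : x ∈ asymptoticCone Γ) : r • x ∈ asymptoticCone Γ := by
  have hclosed : IsClosed {r : ℝ | r • x ∈ asymptoticCone Γ} :=
    isClosed_asymptoticCone.preimage (continuous_id.smul continuous_const)
  have hratio : ∀ {p q : ℕ}, p ≠ 0 → q ≠ 0 → ((p : ℝ) / q) • x ∈ asymptoticCone Γ :=
    fun hp hq => mem_iInter.2 fun M => map_mem_closure (continuous_const_smul _)
      (mem_iInter.1 hx M) fun _ hy => natCast_div_smul_mem_scaledPoints hp hq hy
  -- scaling by `p / q` is exact on `scaledPoints`, and `r > 0` is the limit of `⌈r q⌉₊ / q`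
  suffices Ioi 0 ⊆ {r : ℝ | r • x ∈ asymptoticCone Γ} from
    hclosed.closure_subset_iff.2 this (by rwa [closure_Ioi])
  intro r (hr : 0 < r)
  have hlim : Tendsto (fun q : ℕ => ((⌈r * q⌉₊ : ℕ) : ℝ) / q) atTop (𝓝 r) := by
    have h := (tendsto_nat_ceil_div_atTop.comp
      (tendsto_natCast_atTop_atTop.const_mul_atTop hr)).const_mul r
    rw [mul_one] at h
    refine h.congr' ((eventually_ne_atTop 0).mono fun q hq => ?_)
    simp only [Function.comp_apply]
    field_simp
  refine hclosed.mem_of_tendsto hlim ((eventually_ne_atTop 0).mono fun q hq => hratio ?_ hq)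
  exact Nat.pos_iff_ne_zero.1 (Nat.ceil_pos.2 (by positivity))

lemma closedConvexCone_subset_asymptoticCone :
    closedConvexCone n (toR n '' (Γ : Set (Fin (n + 1) → ℕ))) ⊆ asymptoticCone Γ :=
  closedConvexCone_subset (by rintro _ ⟨α, hα, rfl⟩; exact toR_mem_asymptoticCone hα)
    isClosed_asymptoticCone
    (fun _ hx _ hy _ _ ha hb _ =>
      add_mem_asymptoticCone (smul_mem_asymptoticCone ha hx) (smul_mem_asymptoticCone hb hy))
    fun _ hc _ hx => smul_mem_asymptoticCone hc hx

structure IsScaledLimit (Γ : AddSubsemigroup (Fin (n + 1) → ℕ)) (α : ℕ → Fin (n + 1) → ℕ)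
    (N : ℕ → ℕ) (x : EuclideanSpace ℝ (Fin (n + 1))) : Prop where
  mem : ∀ k, α k ∈ Γ
  scale_ne_zero : ∀ k, N k ≠ 0
  tendsto_scale : Tendsto N atTop atTop
  tendsto : Tendsto (fun k => (N k : ℝ)⁻¹ • toR n (α k)) atTop (𝓝 x)

lemma exists_isScaledLimit {x : EuclideanSpace ℝ (Fin (n + 1))}
    (hx : x ∈ closedConvexCone n (toR n '' (Γ : Set (Fin (n + 1) → ℕ)))) :
    ∃ α N, IsScaledLimit Γ α N x := by
  have h : ∀ k : ℕ, ∃ y ∈ scaledPoints Γ k, dist x y < 1 / (k + 1) := fun k =>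
    Metric.mem_closure_iff.1 (mem_iInter.1 (closedConvexCone_subset_asymptoticCone hx) k) _
      Nat.one_div_pos_of_nat
  choose y hy hdist using h
  choose α hα N hN hαN using hy
  refine ⟨α, N, hα, fun k => by have := hN k; omega,
    tendsto_atTop_mono (fun k => (hN k).le) tendsto_id, ?_⟩
  simp only [hαN]
  exact tendsto_iff_dist_tendsto_zero.2 (squeeze_zero (fun _ => dist_nonneg)
    (fun k => (dist_comm _ _).trans_le (hdist k).le) tendsto_one_div_add_atTop_nhds_zero_nat)

lemma IsScaledLimit.add {α β : ℕ → Fin (n + 1) → ℕ} {N M : ℕ → ℕ}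
    {x y : EuclideanSpace ℝ (Fin (n + 1))} (hx : IsScaledLimit Γ α N x)
    (hy : IsScaledLimit Γ β M y) :
    IsScaledLimit Γ (fun k => M k • α k + N k • β k) (fun k => N k * M k) (x + y) where
  mem k := Γ.add_mem (Γ.nsmul_mem (hx.mem k) (hy.scale_ne_zero k))
    (Γ.nsmul_mem (hy.mem k) (hx.scale_ne_zero k))
  scale_ne_zero k := mul_ne_zero (hx.scale_ne_zero k) (hy.scale_ne_zero k)
  tendsto_scale := hx.tendsto_scale.atTop_mul_atTop₀ hy.tendsto_scale
  tendsto := by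
    simp only [inv_mul_smul_toR_add _ _ (hx.scale_ne_zero _) (hy.scale_ne_zero _)]
    exact hx.tendsto.add hy.tendsto

lemma isScaledLimit_nsmul {α : Fin (n + 1) → ℕ} (hα : α ∈ Γ) :
    IsScaledLimit Γ (fun k => (k + 1) • α) (fun k => k + 1) (toR n α) where
  mem k := Γ.nsmul_mem hα k.succ_ne_zero
  scale_ne_zero k := k.succ_ne_zero
  tendsto_scale := tendsto_add_atTop_nat 1
  tendsto := tendsto_const_nhds.congr fun k => by rw [toR_nsmul, inv_smul_smul₀ (by positivity)]

structure IsChebyshevTransform (Γ : AddSubsemigroup (Fin (n + 1) → ℕ))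
    (F : (Fin (n + 1) → ℕ) → ℝ) (c : EuclideanSpace ℝ (Fin (n + 1)) → ℝ) : Prop where
  tendsto : ∀ p ∈ interior (closedConvexCone n (toR n '' (Γ : Set (Fin (n + 1) → ℕ)))) ∩
      Sigma0 n,
    ∀ α : ℕ → (Fin (n + 1) → ℕ),
      (∀ k, α k ∈ Γ) →
      Tendsto (fun k => coordSum n (toR n (α k))) atTop atTop →
      Tendsto (fun k => (coordSum n (toR n (α k)))⁻¹ • toR n (α k)) atTop (nhds p) →
      Tendsto (fun k => F (α k) / coordSum n (toR n (α k))) atTop (nhds (c p))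
  homogeneous : ∀ x ∈ interior (closedConvexCone n (toR n '' (Γ : Set (Fin (n + 1) → ℕ)))),
    c x = coordSum n x * c ((coordSum n x)⁻¹ • x)

namespace IsChebyshevTransform

variable {F : (Fin (n + 1) → ℕ) → ℝ} {c : EuclideanSpace ℝ (Fin (n + 1)) → ℝ}

lemma map_smul (hc : IsChebyshevTransform Γ F c) {x : EuclideanSpace ℝ (Fin (n + 1))}
    (hx : x ∈ interiorCone (Γ : Set (Fin (n + 1) → ℕ))) {r : ℝ} (hr : 0 < r) :
    c (r • x) = r * c x := by
  have hσ := coordSum_pos hx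
  have hdir : (r * coordSum n x)⁻¹ • r • x = (coordSum n x)⁻¹ • x := by
    rw [smul_smul]
    congr 1
    field_simp
  rw [hc.homogeneous _ ((interiorCone _).smul_mem hr hx), hc.homogeneous x hx, coordSum_smul,
    hdir, mul_assoc]

/-- The scaling `N k` may differ from `|α k|`: the ratio tends to `|x|`, which homogeneity
absorbs. -/
lemma tendsto_div_of_isScaledLimit (hc : IsChebyshevTransform Γ F c)
    {x : EuclideanSpace ℝ (Fin (n + 1))} (hx : x ∈ interiorCone (Γ : Set (Fin (n + 1) → ℕ)))
    {α : ℕ → Fin (n + 1) → ℕ} {N : ℕ → ℕ} (h : IsScaledLimit Γ α N x) :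
    Tendsto (fun k => F (α k) / N k) atTop (𝓝 (c x)) := by
  set σ := coordSum n x
  have hσ : 0 < σ := coordSum_pos hx
  have hN : ∀ k, (N k : ℝ) ≠ 0 := fun k => Nat.cast_ne_zero.2 (h.scale_ne_zero k)
  have hratio : Tendsto (fun k => coordSum n (toR n (α k)) / N k) atTop (𝓝 σ) := by
    simpa [Function.comp_def, coordSum_smul, inv_mul_eq_div] using
      (continuous_coordSum.tendsto x).comp h.tendsto
  have hsize : Tendsto (fun k => coordSum n (toR n (α k))) atTop atTop :=
    ((tendsto_natCast_atTop_atTop.comp h.tendsto_scale).atTop_mul_pos hσ hratio).congr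
      fun k => mul_div_cancel₀ _ (hN k)
  have hdir : Tendsto (fun k => (coordSum n (toR n (α k)))⁻¹ • toR n (α k)) atTop
      (𝓝 (σ⁻¹ • x)) := by
    refine ((hratio.inv₀ hσ.ne').smul h.tendsto).congr' ?_
    filter_upwards [hsize.eventually_gt_atTop 0] with k hk
    rw [smul_smul]
    congr 1
    field_simp [hN k]
  have hpO : σ⁻¹ • x ∈ interiorCone (Γ : Set (Fin (n + 1) → ℕ)) :=
    (interiorCone _).smul_mem (inv_pos.2 hσ) hx
  have hp1 : coordSum n (σ⁻¹ • x) = 1 := by rw [coordSum_smul, inv_mul_cancel₀ hσ.ne']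
  have hp : σ⁻¹ • x ∈ interior (closedConvexCone n (toR n '' (Γ : Set (Fin (n + 1) → ℕ)))) ∩
      Sigma0 n := ⟨hpO, hp1, pos_of_mem_interiorCone hpO⟩
  rw [hc.homogeneous x hx, mul_comm]
  refine ((hc.tendsto _ hp α h.mem hsize hdir).mul hratio).congr' ?_
  filter_upwards [hsize.eventually_gt_atTop 0] with k hk
  rw [div_mul_div_cancel₀ hk.ne']

lemma apply_toR_le (hc : IsChebyshevTransform Γ F c)
    (hF : ∀ α ∈ Γ, ∀ β ∈ Γ, F (α + β) ≤ F α + F β) {α : Fin (n + 1) → ℕ} (hα : α ∈ Γ)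
    (hαO : toR n α ∈ interiorCone (Γ : Set (Fin (n + 1) → ℕ))) : c (toR n α) ≤ F α := by
  refine le_of_tendsto (hc.tendsto_div_of_isScaledLimit hαO (isScaledLimit_nsmul hα))
    (Eventually.of_forall fun k => ?_)
  rw [div_le_iff₀' (by positivity)]
  exact_mod_cast AddSubsemigroup.map_nsmul_le hF hα k.succ_ne_zero

lemma map_add_le (hc : IsChebyshevTransform Γ F c)
    (hF : ∀ α ∈ Γ, ∀ β ∈ Γ, F (α + β) ≤ F α + F β) {x y : EuclideanSpace ℝ (Fin (n + 1))}
    (hx : x ∈ interiorCone (Γ : Set (Fin (n + 1) → ℕ)))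
    (hy : y ∈ interiorCone (Γ : Set (Fin (n + 1) → ℕ))) : c (x + y) ≤ c x + c y := by
  obtain ⟨α, N, hα⟩ := exists_isScaledLimit (interior_subset hx)
  obtain ⟨β, M, hβ⟩ := exists_isScaledLimit (interior_subset hy)
  refine le_of_tendsto_of_tendsto' (hc.tendsto_div_of_isScaledLimit
    ((interiorCone _).add_mem hx hy) (hα.add hβ))
    ((hc.tendsto_div_of_isScaledLimit hx hα).add (hc.tendsto_div_of_isScaledLimit hy hβ))
    fun k => ?_
  have hN : (N k : ℝ) ≠ 0 := Nat.cast_ne_zero.2 (hα.scale_ne_zero k)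
  have hM : (M k : ℝ) ≠ 0 := Nat.cast_ne_zero.2 (hβ.scale_ne_zero k)
  have hsplit := (hF _ (Γ.nsmul_mem (hα.mem k) (hβ.scale_ne_zero k)) _
    (Γ.nsmul_mem (hβ.mem k) (hα.scale_ne_zero k))).trans (add_le_add
      (AddSubsemigroup.map_nsmul_le hF (hα.mem k) (hβ.scale_ne_zero k))
      (AddSubsemigroup.map_nsmul_le hF (hβ.mem k) (hα.scale_ne_zero k)))
  have hpos : (0 : ℝ) < N k * M k := by positivity
  simp only [Nat.cast_mul]
  rw [div_le_iff₀ hpos]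
  calc F (M k • α k + N k • β k) ≤ M k * F (α k) + N k * F (β k) := hsplit
    _ = (F (α k) / N k + F (β k) / M k) * (N k * M k) := by field_simp

lemma linearMap_apply_le (hc : IsChebyshevTransform Γ F c)
    {g : EuclideanSpace ℝ (Fin (n + 1)) →ₗ[ℝ] ℝ}
    (hg : ∀ α ∈ (Γ : Set (Fin (n + 1) → ℕ)),
      toR n α ∈ interiorCone (Γ : Set (Fin (n + 1) → ℕ)) → g (toR n α) ≤ F α)
    {x : EuclideanSpace ℝ (Fin (n + 1))} (hx : x ∈ interiorCone (Γ : Set (Fin (n + 1) → ℕ))) :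
    g x ≤ c x := by
  obtain ⟨α, N, hα⟩ := exists_isScaledLimit (interior_subset hx)
  have hgα : Tendsto (fun k => g ((N k : ℝ)⁻¹ • toR n (α k))) atTop (𝓝 (g x)) :=
    (g.continuous_of_finiteDimensional.tendsto x).comp hα.tendsto
  refine le_of_tendsto_of_tendsto hgα (hc.tendsto_div_of_isScaledLimit hx hα) ?_
  filter_upwards [hα.tendsto.eventually ((isOpen_interiorCone _).mem_nhds hx)] with k hk
  have hN : (0 : ℝ) < N k := Nat.cast_pos.2 (Nat.pos_of_ne_zero (hα.scale_ne_zero k))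
  have hmem : toR n (α k) ∈ interiorCone (Γ : Set (Fin (n + 1) → ℕ)) := by
    simpa [smul_smul, hN.ne'] using (interiorCone _).smul_mem hN hk
  rw [_root_.map_smul, smul_eq_mul, inv_mul_eq_div]
  exact div_le_div_of_nonneg_right (hg _ (hα.mem k) hmem) hN.le

end IsChebyshevTransform

end ChebyshevTransform

open ConvexCone ChebyshevTransform in
theorem chebyshev_transform_eq_convexEnvelope_general (n : ℕ) (Γ : AddSubsemigroup (Fin (n + 1) → ℕ))
    (F : (Fin (n + 1) → ℕ) → ℝ)
    (hsub : ∀ α ∈ Γ, ∀ β ∈ Γ, F (α + β) ≤ F α + F β)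
    (c : EuclideanSpace ℝ (Fin (n + 1)) → ℝ)
    (hc_limit : ∀ p ∈ interior (closedConvexCone n (toR n '' (Γ : Set (Fin (n + 1) → ℕ)))) ∩
        Sigma0 n,
      ∀ α : ℕ → (Fin (n + 1) → ℕ),
        (∀ k, α k ∈ Γ) →
        Tendsto (fun k => coordSum n (toR n (α k))) atTop atTop →
        Tendsto (fun k => (coordSum n (toR n (α k)))⁻¹ • toR n (α k)) atTop (nhds p) →
        Tendsto (fun k => F (α k) / coordSum n (toR n (α k))) atTop (nhds (c p)))
    (hc_hom : ∀ x ∈ interior (closedConvexCone n (toR n '' (Γ : Set (Fin (n + 1) → ℕ)))),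
      c x = coordSum n x * c ((coordSum n x)⁻¹ • x)) :
    ∀ x ∈ interior (closedConvexCone n (toR n '' (Γ : Set (Fin (n + 1) → ℕ)))),
      c x = convexEnvelope n (Γ : Set (Fin (n + 1) → ℕ)) F x := by
  intro x hx
  have hc : IsChebyshevTransform Γ F c := ⟨hc_limit, hc_hom⟩
  have hsublin : SublinearOn (interiorCone (Γ : Set (Fin (n + 1) → ℕ))) c :=
    ⟨fun _ ha _ hb => hc.map_add_le hsub ha hb, fun _ hr _ ha => hc.map_smul ha hr⟩
  obtain ⟨g, hgx, hg⟩ := hsublin.exists_linearMap_eq_le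
    ((interiorCone _).exists_smul_add_mem_of_isOpen (isOpen_interiorCone _) hx)
  refine (IsGreatest.csSup_eq ⟨?_, ?_⟩).symm
  · exact ⟨g, fun α hα hαO => (hg _ hαO).trans (hc.apply_toR_le hsub hα hαO), hgx.symm⟩
  rintro _ ⟨lam, hlam, rfl⟩
  exact hc.linearMap_apply_le hlam hx

/-- The one-homogeneous extension of the Chebyshev transform `c[F]` to `Σ(Γ)°` coincides
there with the convex envelope `P(F)`. -/
theorem chebyshev_transform_eq_convexEnvelope (n : ℕ) (Γ : AddSubsemigroup (Fin (n + 1) → ℕ))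
    (hgen : AddSubgroup.closure
      ((fun α : Fin (n + 1) → ℕ => fun i => (α i : ℤ)) '' (Γ : Set (Fin (n + 1) → ℕ))) = ⊤)
    (F : (Fin (n + 1) → ℕ) → ℝ)
    (hsub : ∀ α ∈ Γ, ∀ β ∈ Γ, F (α + β) ≤ F α + F β)
    (hlow : ∀ p ∈ interior (closedConvexCone n (toR n '' (Γ : Set (Fin (n + 1) → ℕ)))),
      ∃ O' : Set (EuclideanSpace ℝ (Fin (n + 1))),
        IsOpen O' ∧ Convex ℝ O' ∧ (∀ c : ℝ, 0 < c → ∀ x ∈ O', c • x ∈ O') ∧ p ∈ O' ∧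
        ∃ lam : EuclideanSpace ℝ (Fin (n + 1)) →ₗ[ℝ] ℝ,
          ∀ α ∈ Γ, toR n α ∈ O' → lam (toR n α) ≤ F α)
    (c : EuclideanSpace ℝ (Fin (n + 1)) → ℝ)
    (hc_limit : ∀ p ∈ interior (closedConvexCone n (toR n '' (Γ : Set (Fin (n + 1) → ℕ)))) ∩
        Sigma0 n,
      ∀ α : ℕ → (Fin (n + 1) → ℕ),
        (∀ k, α k ∈ Γ) →
        Tendsto (fun k => coordSum n (toR n (α k))) atTop atTop →
        Tendsto (fun k => (coordSum n (toR n (α k)))⁻¹ • toR n (α k)) atTop (nhds p) →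
        Tendsto (fun k => F (α k) / coordSum n (toR n (α k))) atTop (nhds (c p)))
    (hc_hom : ∀ x ∈ interior (closedConvexCone n (toR n '' (Γ : Set (Fin (n + 1) → ℕ)))),
      c x = coordSum n x * c ((coordSum n x)⁻¹ • x)) :
    ∀ x ∈ interior (closedConvexCone n (toR n '' (Γ : Set (Fin (n + 1) → ℕ)))),
      c x = convexEnvelope n (Γ : Set (Fin (n + 1) → ℕ)) F x :=
  chebyshev_transform_eq_convexEnvelope_general n Γ F hsub c hc_limit hc_hom
end
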